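/- arXiv:1307.1353 — 7 statements merged into one kernel-verified Lean document; each statement's English description precedes it below -/
import Mathlib

section
/- Let G and H be finite simple graphs, let S ⊆ V(G) be a set of vertices that induces a connected subgraph of G, and let (B_h)_{h ∈ V(H)} be an H-deconstruction of G. Then the set {h ∈ V(H) : S ∩ B_h ≠ ∅} induces a connected subgraph of H. -/
/-!
The set `{h | (S ∩ B h).Nonempty}` is the union, over `g ∈ S`, of the traces `{h | g ∈ B h}`,
each of which is connected. For an edge `g g'` of `G`, coverage puts `g` and `g'` in bags at
equal or adjacent nodes of `H`, so the two traces touch or are joined by an edge and their union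
is connected. Gluing connected patches along the connected graph `G[S]` gives the claim.
-/

open SimpleGraph

/-- The reflexive closure of the adjacency relation of a graph. -/
def reflAdj {α : Type} (G : SimpleGraph α) (a b : α) : Prop := a = b ∨ G.Adj a b

/-- A set of vertices induces a connected subgraph of `G`. -/
def ConnSet {α : Type} (G : SimpleGraph α) (s : Set α) : Prop := (G.induce s).Connected

/-- `B` is an `H`-deconstruction of `G`: coverage and connectivity. -/
def IsDeconstruction {α β : Type} (G : SimpleGraph α) (H : SimpleGraph β)
    (B : β → Set α) : Prop :=
  (∀ g g' : α, reflAdj G g g' →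
      ∃ h h' : β, reflAdj H h h' ∧ g ∈ B h ∪ B h' ∧ g' ∈ B h ∪ B h') ∧
  (∀ g : α, ConnSet H {h | g ∈ B h})

/-- The family `B` (viewed as an `H`-indexed family of bags) has width at most `w`. -/
def DeconWidthLE {α β : Type} (H : SimpleGraph β) (B : β → Set α) (w : ℕ) : Prop :=
  ∀ h h' : β, reflAdj H h h' → (B h ∪ B h').ncard ≤ w

/-- `B` is an `H`-decomposition of `G`: each (refl-)edge inside a single bag, plus
connectivity. -/
def IsDecomposition {α β : Type} (G : SimpleGraph α) (H : SimpleGraph β)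
    (B : β → Set α) : Prop :=
  (∀ g g' : α, reflAdj G g g' → ∃ h : β, g ∈ B h ∧ g' ∈ B h) ∧
  (∀ g : α, ConnSet H {h | g ∈ B h})

/-- A finite simple graph, presented on a vertex set `Fin n`. -/
structure FinGraph where
  n : ℕ
  G : SimpleGraph (Fin n)

/-- `𝒢 ≼ ℋ` : every graph in `𝒢` has an `H`-deconstruction of width `≤ w`
for some `H ∈ ℋ`, for a uniform constant `w`. -/
def DeconLE (𝒢 ℋ : Set FinGraph) : Prop :=
  ∃ w : ℕ, ∀ G ∈ 𝒢, ∃ H ∈ ℋ, ∃ B : Fin H.n → Set (Fin G.n),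
    IsDeconstruction G.G H.G B ∧ DeconWidthLE H.G B w

/-- `𝒢 ≡ ℋ`. -/
def DeconEquiv (𝒢 ℋ : Set FinGraph) : Prop := DeconLE 𝒢 ℋ ∧ DeconLE ℋ 𝒢

/-- `𝒢 ≺ ℋ`. -/
def DeconLT (𝒢 ℋ : Set FinGraph) : Prop := DeconLE 𝒢 ℋ ∧ ¬ DeconEquiv 𝒢 ℋ

/-- `μ` is a minor map from `M` to `G`. -/
def IsMinorMap {α β : Type} (M : SimpleGraph α) (G : SimpleGraph β)
    (μ : α → Set β) : Prop :=
  (∀ m : α, ConnSet G (μ m)) ∧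
  (∀ m m' : α, m ≠ m' → Disjoint (μ m) (μ m')) ∧
  (∀ m m' : α, M.Adj m m' → ∃ g ∈ μ m, ∃ g' ∈ μ m', G.Adj g g')

/-- `M` is a minor of `G`. -/
def IsMinor (M G : FinGraph) : Prop :=
  ∃ μ : Fin M.n → Set (Fin G.n), IsMinorMap M.G G.G μ

/-- The class of all minors of graphs in `𝒢`. -/
def minorsCl (𝒢 : Set FinGraph) : Set FinGraph := {M | ∃ G ∈ 𝒢, IsMinor M G}

/-- The (connected) graph `G`, viewed as a tree, has height at most `d`:
some rooting puts every vertex within distance `d` of the root. -/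
def treeHeightLE (G : FinGraph) (d : ℕ) : Prop :=
  ∃ r : Fin G.n, ∀ v : Fin G.n, G.G.dist r v ≤ d

/-- Every connected component of `G` has height at most `d`. -/
def forestHeightLE (G : FinGraph) (d : ℕ) : Prop :=
  ∀ v : Fin G.n, ∃ r : Fin G.n, G.G.Reachable r v ∧
    ∀ u : Fin G.n, G.G.Reachable r u → G.G.dist r u ≤ d

/-- `ℒ` : the class of all finite simple graphs. -/
def classL : Set FinGraph := Set.univ

/-- `𝒯` : the class of all finite trees. -/
def classT : Set FinGraph := {G | G.G.IsTree}

/-- `𝒫` : the class of all finite paths (on at least two vertices). -/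
def classP : Set FinGraph := {G | ∃ m : ℕ, 2 ≤ m ∧ Nonempty (G.G ≃g pathGraph m)}

/-- `𝒯_d` : all finite trees of height at most `d`. -/
def classTd (d : ℕ) : Set FinGraph := {G | G.G.IsTree ∧ treeHeightLE G d}

/-- `ℱ_d` : all finite forests of height at most `d`. -/
def classFd (d : ℕ) : Set FinGraph := {G | G.G.IsAcyclic ∧ forestHeightLE G d}

/-- The complete `k`-ary tree `T_{h,k}` of height `h`, on strings over `[k]` of
length at most `h`; each string of length `< h` is joined to its one-symbol extensions. -/
def kAryTree (h k : ℕ) : SimpleGraph {l : List (Fin k) // l.length ≤ h} :=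
  SimpleGraph.fromRel (fun a b => ∃ i : Fin k, b.1 = i :: a.1)

/-- For every `k ≥ 1`, the tree `T_{h,k}` is a minor of some graph in `𝒢`. -/
def StackAll (𝒢 : Set FinGraph) (h : ℕ) : Prop :=
  ∀ k : ℕ, 1 ≤ k → ∃ G ∈ 𝒢, ∃ μ : {l : List (Fin k) // l.length ≤ h} → Set (Fin G.n),
    IsMinorMap (kAryTree h k) G.G μ

/-- `𝒢` has stack depth (exactly) `d`. -/
def HasStackDepth (𝒢 : Set FinGraph) (d : ℕ) : Prop :=
  StackAll 𝒢 d ∧ ¬ StackAll 𝒢 (d + 1)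

/-- The tree depth of `G` is at most `h`: there is a rooted forest on the vertex
set of `G` (given by a parent function whose fixed points are the roots) of height
at most `h` whose (ancestor-descendant) closure contains all edges of `G`. -/
def TreeDepthLE {α : Type} (G : SimpleGraph α) (h : ℕ) : Prop :=
  ∃ par : α → α,
    (∀ v : α, par (par^[h] v) = par^[h] v) ∧
    (∀ u v : α, G.Adj u v → (∃ k : ℕ, par^[k] u = v) ∨ (∃ k : ℕ, par^[k] v = u))

/-- The class `𝒢` has bounded tree depth. -/
def HasBoundedTreeDepth (𝒢 : Set FinGraph) : Prop :=
  ∃ h : ℕ, ∀ G ∈ 𝒢, TreeDepthLE G.G h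

/-- The class `𝒢` has bounded treewidth (via tree decompositions). -/
def HasBoundedTreewidth (𝒢 : Set FinGraph) : Prop :=
  ∃ w : ℕ, ∀ G ∈ 𝒢, ∃ H : FinGraph, H.G.IsTree ∧
    ∃ B : Fin H.n → Set (Fin G.n), IsDecomposition G.G H.G B ∧ ∀ h, (B h).ncard ≤ w + 1

/-- The class `𝒢` has bounded pathwidth (via path decompositions). -/
def HasBoundedPathwidth (𝒢 : Set FinGraph) : Prop :=
  ∃ w : ℕ, ∀ G ∈ 𝒢, ∃ H : FinGraph, H ∈ classP ∧
    ∃ B : Fin H.n → Set (Fin G.n), IsDecomposition G.G H.G B ∧ ∀ h, (B h).ncard ≤ w + 1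

/-- A finite rooted tree. -/
structure RootedFinTree where
  n : ℕ
  G : SimpleGraph (Fin n)
  isTree : G.IsTree
  root : Fin n

/-- `c` is a child of `p` in the rooted tree `T`. -/
def RootedFinTree.IsChild (T : RootedFinTree) (p c : Fin T.n) : Prop :=
  T.G.Adj p c ∧ T.G.dist T.root c = T.G.dist T.root p + 1

/-- `a` is an ancestor of `v` in the rooted tree `T` (i.e. `a` lies on the unique
path from the root to `v`). -/
def RootedFinTree.Ancestor (T : RootedFinTree) (a v : Fin T.n) : Prop :=
  T.G.dist T.root v = T.G.dist T.root a + T.G.dist a v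

/-- `(μ m)_{m}` is a nice `M`-deconstruction of `G`, for rooted trees `M`, `G`. -/
def IsNiceDecon (M G : RootedFinTree) (μ : Fin M.n → Set (Fin G.n)) : Prop :=
  IsDeconstruction G.G M.G μ ∧
  IsMinorMap M.G G.G μ ∧
  G.root ∈ μ M.root ∧
  (∀ (m m' : Fin M.n) (g g' : Fin G.n),
    M.IsChild m m' → g ∈ μ m → g' ∈ μ m' → G.G.Adj g g' → G.IsChild g g')

/-- The node `u` of the rooted tree `T` has property `P(d,k)`. -/
def PropP (T : RootedFinTree) (k : ℕ) : ℕ → Fin T.n → Prop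
  | 0, _ => True
  | d + 1, u => ∃ s : Finset (Fin T.n), s.card = k ∧
      (∀ v ∈ s, T.Ancestor u v) ∧
      (∀ v ∈ s, ∀ w ∈ s, v ≠ w → ¬ T.Ancestor v w ∧ ¬ T.Ancestor w v) ∧
      (∀ v ∈ s, PropP T k d v)

namespace SimpleGraph

variable {V : Type*} {G : SimpleGraph V}

lemma induce_iUnion_connected_of_adj_preconnected {ι : Type*} {K : SimpleGraph ι}
    (hK : K.Connected) {F : ι → Set V} (hF : ∀ i, (G.induce (F i)).Connected)
    (hadj : ∀ i j, K.Adj i j → (G.induce (F i ∪ F j)).Preconnected) :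
    (G.induce (⋃ i, F i)).Connected := by
  have hsub : ∀ i, F i ⊆ ⋃ i, F i := Set.subset_iUnion F
  have reach : ∀ i j, K.Walk i j → ∀ (u : F i) (v : F j),
      (G.induce (⋃ i, F i)).Reachable ⟨u, hsub i u.2⟩ ⟨v, hsub j v.2⟩ := by
    intro i j p
    induction p with
    | nil => exact fun u v ↦ ((hF _).preconnected u v).map (induceHomOfLE G (hsub _)).toHom
    | @cons i k j hik _ ih =>
      intro u v
      obtain ⟨w⟩ := (hF k).nonempty
      have huw := hadj i k hik ⟨u, Or.inl u.2⟩ ⟨w, Or.inr w.2⟩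
      exact (huw.map (induceHomOfLE G (Set.union_subset (hsub i) (hsub k))).toHom).trans (ih w v)
  obtain ⟨i⟩ := hK.nonempty
  obtain ⟨u⟩ := (hF i).nonempty
  refine (connected_iff_exists_forall_reachable _).2 ⟨⟨u, hsub i u.2⟩, ?_⟩
  rintro ⟨v, hv⟩
  obtain ⟨j, hj⟩ := Set.mem_iUnion.1 hv
  exact reach i j (hK.preconnected i j).some u ⟨v, hj⟩

end SimpleGraph

theorem reflAdj_symm {β : Type} {H : SimpleGraph β} {a b : β} (hab : reflAdj H a b) :
    reflAdj H b a :=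
  hab.imp Eq.symm H.adj_symm

theorem ConnSet.union_of_reflAdj {β : Type} {H : SimpleGraph β} {s t : Set β} {x y : β}
    (hs : ConnSet H s) (ht : ConnSet H t) (hx : x ∈ s) (hy : y ∈ t) (hxy : reflAdj H x y) :
    ConnSet H (s ∪ t) := by
  rcases hxy with rfl | hxy
  · exact induce_union_connected hs.preconnected ht.preconnected ⟨x, hx, hy⟩
  · exact connected_induce_union hs.preconnected ht.preconnected hx hy hxy

namespace IsDeconstruction

variable {α β : Type} {G : SimpleGraph α} {H : SimpleGraph β} {B : β → Set α}

theorem connSet_union_of_adj (hB : IsDeconstruction G H B) {g g' : α} (hgg' : G.Adj g g') :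
    ConnSet H ({h | g ∈ B h} ∪ {h | g' ∈ B h}) := by
  obtain ⟨a, b, hab, hg, hg'⟩ := hB.1 g g' (Or.inr hgg')
  rcases hg with hg | hg <;> rcases hg' with hg' | hg' <;>
    refine (hB.2 g).union_of_reflAdj (hB.2 g') hg hg' ?_
  exacts [Or.inl rfl, hab, reflAdj_symm hab, Or.inl rfl]

end IsDeconstruction

theorem inheriting_connectivity_general {α β : Type}
    (G : SimpleGraph α) (H : SimpleGraph β)
    (S : Set α) (hS : ConnSet G S)
    (B : β → Set α) (hB : IsDeconstruction G H B) :
    ConnSet H {h | (S ∩ B h).Nonempty} := by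
  have hT : {h | (S ∩ B h).Nonempty} = ⋃ g : S, {h | (g : α) ∈ B h} := by
    ext h
    simp [Set.Nonempty]
  rw [hT]
  exact induce_iUnion_connected_of_adj_preconnected hS (fun g ↦ hB.2 g)
    (fun g g' hgg' ↦ (hB.connSet_union_of_adj hgg').preconnected)

/-- If `S` induces a connected subgraph of `G` and `B` is an
`H`-deconstruction of `G`, then `{h | S ∩ B h ≠ ∅}` induces a connected
subgraph of `H`. -/
theorem inheriting_connectivity {α β : Type} [Fintype α] [Fintype β]
    (G : SimpleGraph α) (H : SimpleGraph β)
    (S : Set α) (hS : ConnSet G S)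
    (B : β → Set α) (hB : IsDeconstruction G H B) :
    ConnSet H {h | (S ∩ B h).Nonempty} :=
  inheriting_connectivity_general G H S hS B hB
end

section
/- Let G, H and I be finite simple graphs. If G has an H-deconstruction of width ≤ v and H has an I-deconstruction of width ≤ w, then G has an I-deconstruction of width ≤ vw. Explicitly, if (B_h)_{h ∈ V(H)} is an H-deconstruction of G and (C_i)_{i ∈ V(I)} is an I-deconstruction of H, then (⋃_{h ∈ C_i} B_h)_{i ∈ V(I)} is an I-deconstruction of G. -/
/-!
A vertex `g` of `G` lies in the composed bag at `i` exactly when it lies in `B h` for some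
`h ∈ C i`. So the `I`-vertices whose composed bag contains `g` form the union, over the connected
set of `H`-vertices `h` with `g ∈ B h`, of the connected sets `{i | h ∈ C i}`; coverage of the
edges of `H` by `C` makes the pieces for adjacent `h` touch, so the union is connected. The width
bound holds because two adjacent composed bags are the union of at most `w` bags `B h`, each of
size at most `v`.
-/

open SimpleGraph

open Set

variable {α β γ : Type}

theorem reflAdj_comm {G : SimpleGraph α} {a b : α} : reflAdj G a b ↔ reflAdj G b a := by
  rw [reflAdj, reflAdj, eq_comm, G.adj_comm]

theorem ConnSet.union_of_reflAdj_s2 {I : SimpleGraph γ} {s t : Set γ} (hs : ConnSet I s)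
    (ht : ConnSet I t) {i i' : γ} (hi : i ∈ s) (hi' : i' ∈ t) (hii' : reflAdj I i i') :
    ConnSet I (s ∪ t) := by
  rcases hii' with rfl | hadj
  · exact induce_union_connected hs.preconnected ht.preconnected ⟨i, hi, hi'⟩
  · exact connected_induce_union hs.preconnected ht.preconnected hi hi' hadj

theorem ConnSet.biUnion {H : SimpleGraph β} {I : SimpleGraph γ} {T : Set β} {A : β → Set γ}
    (hT : ConnSet H T) (hA : ∀ h ∈ T, ConnSet I (A h))
    (htouch : ∀ h ∈ T, ∀ h' ∈ T, H.Adj h h' → ∃ i ∈ A h, ∃ i' ∈ A h', reflAdj I i i') :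
    ConnSet I (⋃ h ∈ T, A h) := by
  obtain ⟨⟨h₀, hh₀⟩⟩ := hT.nonempty
  obtain ⟨u, hu⟩ := (hA h₀ hh₀).nonempty
  have patch : ∀ h : T, ∃ S ⊆ ⋃ h ∈ T, A h, A h₀ ⊆ S ∧ A h ⊆ S ∧ ConnSet I S := by
    intro h
    induction (reachable_iff_reflTransGen _ _).1 (hT.preconnected ⟨h₀, hh₀⟩ h) with
    | refl => exact ⟨A h₀, subset_biUnion_of_mem hh₀, subset_rfl, subset_rfl, hA h₀ hh₀⟩
    | @tail b c _ hbc ih =>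
      obtain ⟨S, hSU, h₀S, hbS, hS⟩ := ih
      obtain ⟨i, hi, i', hi', hii'⟩ := htouch b b.2 c c.2 hbc
      exact ⟨S ∪ A c, union_subset hSU (subset_biUnion_of_mem c.2),
        h₀S.trans subset_union_left, subset_union_right,
        hS.union_of_reflAdj_s2 (hA c c.2) (hbS hi) hi' hii'⟩
  refine I.induce_connected_of_patches u (subset_biUnion_of_mem hh₀ hu) fun {x} hx => ?_
  obtain ⟨h, hh, hxh⟩ := mem_iUnion₂.1 hx
  obtain ⟨S, hSU, h₀S, hhS, hS⟩ := patch ⟨h, hh⟩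
  exact ⟨S, hSU, h₀S hu, hhS hxh, hS.preconnected _ _⟩

theorem Set.Finite.ncard_biUnion_le_mul {ι δ : Type*} {s : Set ι} (hs : s.Finite)
    {A : ι → Set δ} {v : ℕ} (hA : ∀ i ∈ s, (A i).ncard ≤ v) :
    (⋃ i ∈ s, A i).ncard ≤ s.ncard * v := by
  rw [← hs.coe_toFinset, ncard_coe_finset]
  calc (⋃ i ∈ hs.toFinset, A i).ncard ≤ ∑ i ∈ hs.toFinset, (A i).ncard :=
        Finset.set_ncard_biUnion_le _ _
    _ ≤ ∑ _i ∈ hs.toFinset, v := Finset.sum_le_sum fun i hi => hA i (hs.mem_toFinset.1 hi)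
    _ = hs.toFinset.card * v := by rw [Finset.sum_const, smul_eq_mul]

theorem IsDeconstruction.exists_reflAdj_mem {H : SimpleGraph β} {I : SimpleGraph γ}
    {C : γ → Set β} (hC : IsDeconstruction H I C) {h h' : β} (hhh' : reflAdj H h h') :
    ∃ i i', reflAdj I i i' ∧ h ∈ C i ∧ h' ∈ C i' := by
  obtain ⟨j, j', hjj', hh | hh, hh' | hh'⟩ := hC.1 h h' hhh'
  · exact ⟨j, j, Or.inl rfl, hh, hh'⟩
  · exact ⟨j, j', hjj', hh, hh'⟩
  · exact ⟨j', j, reflAdj_comm.1 hjj', hh, hh'⟩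
  · exact ⟨j', j', Or.inl rfl, hh, hh'⟩

theorem DeconWidthLE.ncard_le {H : SimpleGraph β} {B : β → Set α} {v : ℕ}
    (hBw : DeconWidthLE H B v) (h : β) : (B h).ncard ≤ v := by
  simpa using hBw h h (Or.inl rfl)

def composeBags (B : β → Set α) (C : γ → Set β) (i : γ) : Set α := ⋃ h ∈ C i, B h

section composeBags

variable {G : SimpleGraph α} {H : SimpleGraph β} {I : SimpleGraph γ}
  {B : β → Set α} {C : γ → Set β}

theorem mem_composeBags {g : α} {i : γ} : g ∈ composeBags B C i ↔ ∃ h ∈ C i, g ∈ B h := by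
  simp [composeBags]

theorem composeBags_union (i i' : γ) :
    composeBags B C i ∪ composeBags B C i' = ⋃ h ∈ C i ∪ C i', B h :=
  (biUnion_union _ _ _).symm

theorem IsDeconstruction.compose (hB : IsDeconstruction G H B)
    (hC : IsDeconstruction H I C) : IsDeconstruction G I (composeBags B C) := by
  refine ⟨fun g g' hgg' => ?_, fun g => ?_⟩
  · obtain ⟨h, h', hhh', hg, hg'⟩ := hB.1 g g' hgg'
    obtain ⟨i, i', hii', hh, hh'⟩ := hC.1 h h' hhh'
    have hsub : B h ∪ B h' ⊆ composeBags B C i ∪ composeBags B C i' := by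
      rw [composeBags_union]
      exact union_subset (subset_biUnion_of_mem hh) (subset_biUnion_of_mem hh')
    exact ⟨i, i', hii', hsub hg, hsub hg'⟩
  · have hbags : {i | g ∈ composeBags B C i} = ⋃ h ∈ {h | g ∈ B h}, {i | h ∈ C i} := by
      ext i
      simp [mem_composeBags, and_comm]
    rw [hbags]
    refine (hB.2 g).biUnion (fun h _ => hC.2 h) fun h _ h' _ hhh' => ?_
    obtain ⟨i, i', hii', hi, hi'⟩ := hC.exists_reflAdj_mem (Or.inr hhh')
    exact ⟨i, hi, i', hi', hii'⟩

theorem DeconWidthLE.compose [Finite β] {v w : ℕ} (hBw : DeconWidthLE H B v)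
    (hCw : DeconWidthLE I C w) : DeconWidthLE I (composeBags B C) (v * w) := by
  intro i i' hii'
  rw [composeBags_union, mul_comm]
  calc (⋃ h ∈ C i ∪ C i', B h).ncard ≤ (C i ∪ C i').ncard * v :=
        (toFinite _).ncard_biUnion_le_mul fun h _ => hBw.ncard_le h
    _ ≤ w * v := Nat.mul_le_mul_right v (hCw i i' hii')

end composeBags

theorem compose_deconstructions_general {α β γ : Type} [Fintype β]
    (G : SimpleGraph α) (H : SimpleGraph β) (I : SimpleGraph γ) (v w : ℕ)
    (B : β → Set α) (hB : IsDeconstruction G H B) (hBw : DeconWidthLE H B v)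
    (C : γ → Set β) (hC : IsDeconstruction H I C) (hCw : DeconWidthLE I C w) :
    IsDeconstruction G I (fun i => ⋃ h ∈ C i, B h) ∧
      DeconWidthLE I (fun i => ⋃ h ∈ C i, B h) (v * w) :=
  ⟨hB.compose hC, hBw.compose hCw⟩

/-- composing an `H`-deconstruction of `G` of width `≤ v` with an
`I`-deconstruction of `H` of width `≤ w` yields the explicit `I`-deconstruction
`(⋃_{h ∈ C i} B h)_i` of `G`, of width `≤ v * w`. -/
theorem compose_deconstructions {α β γ : Type} [Fintype α] [Fintype β] [Fintype γ]
    (G : SimpleGraph α) (H : SimpleGraph β) (I : SimpleGraph γ) (v w : ℕ)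
    (B : β → Set α) (hB : IsDeconstruction G H B) (hBw : DeconWidthLE H B v)
    (C : γ → Set β) (hC : IsDeconstruction H I C) (hCw : DeconWidthLE I C w) :
    IsDeconstruction G I (fun i => ⋃ h ∈ C i, B h) ∧
      DeconWidthLE I (fun i => ⋃ h ∈ C i, B h) (v * w) :=
  compose_deconstructions_general G H I v w B hB hBw C hC hCw
end

section
/- For every class 𝒢 of finite simple graphs, 𝒢 ≡ minors(𝒢). In particular, whenever a finite simple graph M is a minor of a finite simple graph G, the graph M has a G-deconstruction of width ≤ 2 (namely (B_g)_{g ∈ V(G)} with B_g = {m : g ∈ μ(m)} for a minor map μ from M to G). -/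
/-!
Contracting the branch sets of a minor map `μ : M → G` turns `G` into a bag graph for `M`:
the bag at `g` is the set of branch vertices whose branch set contains `g`. Disjointness of
branch sets makes every bag a subsingleton, so any two adjacent bags hold at most two vertices;
an edge `m m'` of `M` is covered by the bags at the ends of a `G`-edge between `μ m` and `μ m'`;
and the bags containing `m` form exactly `μ m`, which is connected. Every graph is a minor of
itself via singletons, so `𝒢 ≼ minors(𝒢)` and `minors(𝒢) ≼ 𝒢` both follow.
-/

open SimpleGraph

lemma connSet_singleton {α : Type} (G : SimpleGraph α) (g : α) : ConnSet G {g} := by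
  rw [ConnSet, induce_singleton_eq_top]
  exact connected_top

namespace IsMinorMap

variable {α β : Type} {M : SimpleGraph α} {G : SimpleGraph β} {μ : α → Set β}

lemma subsingleton_setOf_mem (hμ : IsMinorMap M G μ) (g : β) :
    {m | g ∈ μ m}.Subsingleton := fun _ hm _ hm' =>
  by_contra fun hne => Set.disjoint_left.mp (hμ.2.1 _ _ hne) hm hm'

lemma isDeconstruction (hμ : IsMinorMap M G μ) :
    IsDeconstruction M G (fun g => {m | g ∈ μ m}) := by
  obtain ⟨hconn, -, hadj⟩ := hμ
  refine ⟨?_, fun m => hconn m⟩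
  rintro m m' (rfl | hmm')
  · obtain ⟨⟨g, hg⟩⟩ := (hconn m).nonempty
    exact ⟨g, g, Or.inl rfl, Or.inl hg, Or.inl hg⟩
  · obtain ⟨g, hg, g', hg', hgg'⟩ := hadj m m' hmm'
    exact ⟨g, g', Or.inr hgg', Or.inl hg, Or.inr hg'⟩

lemma deconWidthLE_two (hμ : IsMinorMap M G μ) :
    DeconWidthLE G (fun g => {m | g ∈ μ m}) 2 := by
  have hle_one (g : β) : {m | g ∈ μ m}.ncard ≤ 1 := by
    have := (hμ.subsingleton_setOf_mem g).finite.to_subtype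
    exact Set.ncard_le_one_iff_subsingleton.mpr (hμ.subsingleton_setOf_mem g)
  intro g g' _
  calc ({m | g ∈ μ m} ∪ {m | g' ∈ μ m}).ncard
      ≤ {m | g ∈ μ m}.ncard + {m | g' ∈ μ m}.ncard := Set.ncard_union_le _ _
    _ ≤ 2 := by linarith [hle_one g, hle_one g']

end IsMinorMap

lemma isMinorMap_singleton {α : Type} (G : SimpleGraph α) :
    IsMinorMap G G (fun g => {g}) :=
  ⟨connSet_singleton G, fun _ _ h => Set.disjoint_singleton.mpr h,
    fun m m' h => ⟨m, rfl, m', rfl, h⟩⟩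

lemma isMinor_refl (G : FinGraph) : IsMinor G G :=
  ⟨_, isMinorMap_singleton G.G⟩

lemma deconLE_of_forall_isMinor {𝒢 ℋ : Set FinGraph} (h : ∀ M ∈ 𝒢, ∃ G ∈ ℋ, IsMinor M G) :
    DeconLE 𝒢 ℋ := by
  refine ⟨2, fun M hM => ?_⟩
  obtain ⟨G, hG, μ, hμ⟩ := h M hM
  exact ⟨G, hG, _, hμ.isDeconstruction, hμ.deconWidthLE_two⟩

/-- every class of finite simple graphs is `≡`-equivalent to the
class of its minors; in particular, whenever `μ` is a minor map from `M` to `G`,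
the family `({m | g ∈ μ m})_{g ∈ V(G)}` is a `G`-deconstruction of `M` of width
at most `2`. -/
theorem equiv_with_minors :
    (∀ 𝒢 : Set FinGraph, DeconEquiv 𝒢 (minorsCl 𝒢)) ∧
    (∀ (α β : Type) [Fintype α] [Fintype β] (M : SimpleGraph α)
      (G : SimpleGraph β) (μ : α → Set β), IsMinorMap M G μ →
        IsDeconstruction M G (fun g => {m | g ∈ μ m}) ∧
        DeconWidthLE G (fun g => {m | g ∈ μ m}) 2) :=
  ⟨fun _ => ⟨deconLE_of_forall_isMinor fun G hG => ⟨G, ⟨G, hG, isMinor_refl G⟩, isMinor_refl G⟩,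
      deconLE_of_forall_isMinor fun _ hM => hM⟩,
    fun _ _ _ _ _ _ _ hμ => ⟨hμ.isDeconstruction, hμ.deconWidthLE_two⟩⟩
end

section
/- Let G and H be finite simple graphs and w ≥ 1. (1) Every H-decomposition of G is also an H-deconstruction of G. (2) If H is a tree and G has an H-deconstruction in which every bag has size ≤ w, then G has an H-decomposition in which every bag has size ≤ 2w. Consequently, when ℋ is a class of finite trees, a class 𝒢 satisfies 𝒢 ≼ ℋ if and only if 𝒢 has ℋ-decompositions of bounded width. -/
open SimpleGraph

/-!
Orient the tree `H` towards a root, so that every node `h` has a parent `par h` (the root is its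
own parent) and every edge of `H` joins a node to its parent. Enlarging each bag `B h` to
`B h ∪ B (par h)` puts both ends of every edge of `G` into a single bag, while each node added to
`{h | g ∈ B h}` is a child of a node already there, so connectivity survives. The new bags are
unions of two bags at adjacent nodes, so their size is bounded by the width of the deconstruction.
-/

namespace SimpleGraph

variable {V : Type*} {H : SimpleGraph V}

theorem IsTree.exists_parent (hT : H.IsTree) :
    ∃ par : V → V, (∀ v, par v = v ∨ H.Adj (par v) v) ∧
      ∀ ⦃u v⦄, H.Adj u v → par u = v ∨ par v = u := by
  obtain ⟨r⟩ := hT.connected.nonempty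
  choose q hq hq_unique using hT.existsUnique_path r
  refine ⟨fun v => (q v).penultimate, fun v => ?_, fun u v huv => ?_⟩
  · by_cases hv : v = r
    · subst hv
      exact .inl (by simp only [← hq_unique v .nil .nil, Walk.penultimate_nil])
    · exact .inr ((q v).adj_penultimate (Walk.not_nil_of_ne (Ne.symm hv)))
  · by_cases hu : u ∈ (q v).support
    · exact .inr (hT.isAcyclic.eq_penultimate_of_adj_end (hq v) huv.symm hu).symm
    · exact .inl (hT.isAcyclic.eq_penultimate_of_adj_end (hq u) huv
        (hT.isAcyclic.mem_support_of_ne_mem_support_of_adj_of_isPath (hq u) (hq v) huv hu)).symm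

end SimpleGraph

section Deconstruction

variable {α β : Type} {G : SimpleGraph α} {H : SimpleGraph β} {B : β → Set α}

theorem ConnSet.of_subset_of_forall_adj {S T : Set β} (hS : ConnSet H S) (hST : S ⊆ T)
    (hT : ∀ t ∈ T, t ∉ S → ∃ s ∈ S, H.Adj s t) : ConnSet H T := by
  obtain ⟨⟨u, hu⟩⟩ := hS.nonempty
  refine induce_connected_of_patches u (hST hu) fun {t} ht => ?_
  by_cases htS : t ∈ S
  · exact ⟨S, hST, hu, htS, hS.preconnected _ _⟩
  · obtain ⟨s, hs, hst⟩ := hT t ht htS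
    refine ⟨S ∪ {s, t}, Set.union_subset hST (Set.insert_subset (hST hs) (by simpa using ht)),
      .inl hu, .inr (by simp), ?_⟩
    exact (induce_union_connected hS.preconnected (induce_pair_connected_of_adj hst).preconnected
      ⟨s, hs, Set.mem_insert s _⟩).preconnected _ _

theorem IsDecomposition.isDeconstruction (hB : IsDecomposition G H B) :
    IsDeconstruction G H B := by
  refine ⟨fun g g' hgg' => ?_, hB.2⟩
  obtain ⟨h, hg, hg'⟩ := hB.1 g g' hgg'
  exact ⟨h, h, .inl rfl, .inl hg, .inl hg'⟩

theorem DeconWidthLE.of_ncard_le {w : ℕ} (hB : ∀ h, (B h).ncard ≤ w) :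
    DeconWidthLE H B (2 * w) := fun h h' _ =>
  calc (B h ∪ B h').ncard ≤ (B h).ncard + (B h').ncard := Set.ncard_union_le _ _
    _ ≤ 2 * w := by linarith [hB h, hB h']

theorem IsDeconstruction.isDecomposition_union_parent {par : β → β}
    (hpar : ∀ h, par h = h ∨ H.Adj (par h) h)
    (hedge : ∀ ⦃h h'⦄, H.Adj h h' → par h = h' ∨ par h' = h) (hB : IsDeconstruction G H B) :
    IsDecomposition G H fun h => B h ∪ B (par h) := by
  refine ⟨fun g g' hgg' => ?_, fun g => ?_⟩
  · obtain ⟨h, h', hhh', hg, hg'⟩ := hB.1 g g' hgg'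
    rcases hhh' with rfl | hhh'
    · exact ⟨h, .inl (by simpa using hg), .inl (by simpa using hg')⟩
    · rcases hedge hhh' with hp | hp
      · exact ⟨h, by simpa only [hp] using hg, by simpa only [hp] using hg'⟩
      · exact ⟨h', by simpa only [hp, Set.union_comm] using hg,
          by simpa only [hp, Set.union_comm] using hg'⟩
  · refine (hB.2 g).of_subset_of_forall_adj (fun h hh => .inl hh) fun t ht htS => ?_
    have hpt : g ∈ B (par t) := ht.resolve_left htS
    exact ⟨par t, hpt, (hpar t).resolve_left fun hfix => htS (hfix ▸ hpt)⟩

theorem IsDeconstruction.exists_isDecomposition (hT : H.IsTree) (hB : IsDeconstruction G H B)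
    {w : ℕ} (hw : DeconWidthLE H B w) :
    ∃ C : β → Set α, IsDecomposition G H C ∧ ∀ h, (C h).ncard ≤ w := by
  obtain ⟨par, hpar, hedge⟩ := hT.exists_parent
  exact ⟨_, hB.isDecomposition_union_parent hpar hedge,
    fun h => hw h (par h) ((hpar h).imp Eq.symm Adj.symm)⟩

end Deconstruction

/-- (1) every `H`-decomposition is an `H`-deconstruction;
(2) if `H` is a tree and `G` has an `H`-deconstruction with all bags of size
`≤ w` (`w ≥ 1`), then `G` has an `H`-decomposition with all bags of size `≤ 2w`;
(3) consequently, for a class `ℋ` of trees, `𝒢 ≼ ℋ` iff `𝒢` has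
`ℋ`-decompositions of bounded width. -/
theorem decomposition_vs_deconstruction :
    (∀ (α β : Type) [Fintype α] [Fintype β] (G : SimpleGraph α)
      (H : SimpleGraph β) (B : β → Set α),
        IsDecomposition G H B → IsDeconstruction G H B) ∧
    (∀ (α β : Type) [Fintype α] [Fintype β] (G : SimpleGraph α)
      (H : SimpleGraph β) (w : ℕ), 1 ≤ w → H.IsTree →
        (∃ B : β → Set α, IsDeconstruction G H B ∧ ∀ h, (B h).ncard ≤ w) →
        ∃ C : β → Set α, IsDecomposition G H C ∧ ∀ h, (C h).ncard ≤ 2 * w) ∧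
    (∀ (𝒢 ℋ : Set FinGraph), (∀ H ∈ ℋ, H.G.IsTree) →
        (DeconLE 𝒢 ℋ ↔
          ∃ w : ℕ, ∀ G ∈ 𝒢, ∃ H ∈ ℋ, ∃ B : Fin H.n → Set (Fin G.n),
            IsDecomposition G.G H.G B ∧ ∀ h, (B h).ncard ≤ w)) := by
  refine ⟨fun _ _ _ _ _ _ _ hB => hB.isDeconstruction, ?_, fun 𝒢 ℋ htrees => ⟨?_, ?_⟩⟩
  · rintro _ _ _ _ _ _ _ _ hT ⟨B, hB, hBw⟩
    exact hB.exists_isDecomposition hT (.of_ncard_le hBw)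
  · rintro ⟨w, hw⟩
    refine ⟨w, fun G hG => ?_⟩
    obtain ⟨H, hH, B, hB, hBw⟩ := hw G hG
    exact ⟨H, hH, hB.exists_isDecomposition (htrees H hH) hBw⟩
  · rintro ⟨w, hw⟩
    refine ⟨2 * w, fun G hG => ?_⟩
    obtain ⟨H, hH, B, hB, hBw⟩ := hw G hG
    exact ⟨H, hH, B, hB.isDeconstruction, .of_ncard_le hBw⟩
end

section
/- Suppose d, e ≥ 0 are constants and 𝒢 is a class of finite trees having stack depth d in which each tree has height ≤ e. Then 𝒢 ≼ 𝒯_d, i.e. there is a constant w such that every tree in 𝒢 has an H-deconstruction of width ≤ w for some tree H of height ≤ d. -/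
open SimpleGraph

/-!
Root a tree `G` of the class at `r`, and fix `k` such that `T_{d+1,k}` is not a minor of any
graph in the class. Rank each vertex `v` by the least `j` for which the subtree of `v` contains
no model of `T_{j,k}` whose root branch set contains `v`. The rank lies in `[1, d + 1]` and
decreases away from the root. If some `t` had `k` pairwise incomparable proper descendants of
its own rank, their models could be grafted below `t`, raising the rank of `t`. So the level
class of `t` (its descendants of the same rank) has at most `k` maximal elements, hence at most
`k (e + 1)` vertices. The level classes are connected; contracting them yields a tree of height
`≤ d`, and taking them as bags gives a deconstruction of width `≤ 2 k (e + 1)`.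
-/

section ConnSet

variable {V : Type} {G : SimpleGraph V}

lemma connSet_singleton_s5 (v : V) : ConnSet G {v} := by
  rw [ConnSet, induce_singleton_eq_top]
  exact connected_top

lemma ConnSet.union {S T : Set V} (hS : ConnSet G S) (hT : ConnSet G T) (h : (S ∩ T).Nonempty) :
    ConnSet G (S ∪ T) :=
  induce_union_connected hS.preconnected hT.preconnected h

end ConnSet

section Relabel

variable {α β γ : Type} {G : SimpleGraph α} {H : SimpleGraph β} {H' : SimpleGraph γ}

lemma ConnSet.preimage_iso (φ : H' ≃g H) {S : Set β} (hS : ConnSet H S) : ConnSet H' (φ ⁻¹' S) := by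
  have hmaps : Set.MapsTo φ.symm S (φ ⁻¹' S) := fun x hx => by simpa using hx
  refine Connected.map (induceHom φ.symm.toHom hmaps) (fun y => ⟨⟨φ y, y.2⟩, ?_⟩) hS
  ext
  simp

lemma reflAdj_iso (φ : H' ≃g H) {a b : γ} : reflAdj H (φ a) (φ b) ↔ reflAdj H' a b := by
  simp [reflAdj, φ.map_adj_iff]

lemma IsDeconstruction.comp_iso {B : β → Set α} (φ : H' ≃g H) (hB : IsDeconstruction G H B) :
    IsDeconstruction G H' (B ∘ φ) := by
  refine ⟨fun g g' hgg' => ?_, fun g => (hB.2 g).preimage_iso φ⟩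
  obtain ⟨h, h', hhh', hg, hg'⟩ := hB.1 g g' hgg'
  refine ⟨φ.symm h, φ.symm h', (reflAdj_iso φ).1 ?_, ?_, ?_⟩ <;> simpa

lemma DeconWidthLE.comp_iso {B : β → Set α} {w : ℕ} (φ : H' ≃g H) (hB : DeconWidthLE H B w) :
    DeconWidthLE H' (B ∘ φ) w :=
  fun a b hab => hB (φ a) (φ b) ((reflAdj_iso φ).2 hab)

lemma exists_mem_classTd_of_isTree [Fintype β] {B : β → Set α} {h w : ℕ} (hH : H.IsTree) (r : β)
    (hr : ∀ v, H.dist r v ≤ h) (hB : IsDeconstruction G H B) (hw : DeconWidthLE H B w) :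
    ∃ T ∈ classTd h, ∃ B' : Fin T.n → Set α, IsDeconstruction G T.G B' ∧ DeconWidthLE T.G B' w := by
  set e := Fintype.equivFin β
  set φ : H.comap e.symm ≃g H := Iso.comap e.symm H
  refine ⟨⟨_, H.comap e.symm⟩, ⟨φ.isTree_iff.2 hH, e r, fun v => ?_⟩, B ∘ φ, hB.comp_iso φ,
    hw.comp_iso φ⟩
  obtain ⟨q, hq⟩ := hH.connected.exists_walk_length_eq_dist r (e.symm v)
  have := dist_le (q.map φ.symm.toHom)
  simp only [Walk.length_map] at this
  simpa [φ] using this.trans (hq ▸ hr (e.symm v))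

end Relabel

def parentGraph {W : Type} (p : W → W) (r : W) : SimpleGraph W :=
  SimpleGraph.fromRel fun a b => a ≠ r ∧ p a = b

section ParentGraph

variable {W : Type} {p : W → W} {r : W} {ρ : W → ℕ} (hρ : ∀ w, w ≠ r → ρ (p w) < ρ w)
include hρ

lemma parentGraph_adj_parent {w : W} (hw : w ≠ r) : (parentGraph p r).Adj w (p w) := by
  refine (SimpleGraph.fromRel_adj _ _ _).2 ⟨fun h => ?_, Or.inl ⟨hw, rfl⟩⟩
  have := hρ w hw
  rw [← h] at this
  exact lt_irrefl _ this

lemma exists_walk_length_le_potential (w : W) :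
    ∃ q : (parentGraph p r).Walk w r, q.length ≤ ρ w := by
  induction h : ρ w using Nat.strong_induction_on generalizing w with
  | _ n ih =>
    by_cases hw : w = r
    · subst hw
      exact ⟨.nil, by simp⟩
    · obtain ⟨q, hq⟩ := ih (ρ (p w)) (h ▸ hρ w hw) (p w) rfl
      refine ⟨.cons (parentGraph_adj_parent hρ hw) q, ?_⟩
      have := hρ w hw
      simp only [SimpleGraph.Walk.length_cons]
      omega

/-- On a cycle, a vertex of maximal potential would have two distinct neighbours on the cycle,
but its only neighbour of smaller potential is its parent. -/
lemma parentGraph_isAcyclic : (parentGraph p r).IsAcyclic := by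
  classical
  intro v c hc
  obtain ⟨u, hu, humax⟩ := c.support.toFinset.exists_max_image ρ ⟨v, by simp⟩
  rw [List.mem_toFinset] at hu
  have heq : ∀ x ∈ c.support, (parentGraph p r).Adj u x → x = p u := by
    intro x hx hux
    rcases ((SimpleGraph.fromRel_adj _ _ _).1 hux).2 with h | h
    · exact h.2.symm
    · have := hρ x h.1
      rw [h.2] at this
      exact absurd (humax x (List.mem_toFinset.2 hx)) (not_le.2 this)
  set c' := c.rotate u hu
  have hc' : c'.IsCycle := hc.rotate hu
  have hnil := hc'.not_nil
  have hmem : ∀ i, c'.getVert i ∈ c.support :=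
    fun i => (c.mem_support_rotate_iff u hu).1 (c'.getVert_mem_support i)
  exact hc'.snd_ne_penultimate ((heq _ (hmem 1) (c'.adj_snd hnil)).trans
    (heq _ (hmem _) (c'.adj_penultimate hnil).symm).symm)

lemma parentGraph_isTree : (parentGraph p r).IsTree where
  connected := by
    have : Nonempty W := ⟨r⟩
    refine SimpleGraph.Connected.mk fun a b => ?_
    obtain ⟨qa, -⟩ := exists_walk_length_le_potential hρ a
    obtain ⟨qb, -⟩ := exists_walk_length_le_potential hρ b
    exact ⟨qa.append qb.reverse⟩
  isAcyclic := parentGraph_isAcyclic hρ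

lemma parentGraph_dist_le (w : W) : (parentGraph p r).dist r w ≤ ρ w := by
  obtain ⟨q, hq⟩ := exists_walk_length_le_potential hρ w
  rw [SimpleGraph.dist_comm]
  exact (SimpleGraph.dist_le q).trans hq

end ParentGraph

namespace SimpleGraph

variable {V : Type} {G : SimpleGraph V}

/-- `a` lies on the path from the root `r` to `v`. -/
def IsAncestor (G : SimpleGraph V) (r a v : V) : Prop := G.dist r a + G.dist a v = G.dist r v

def IsParent (G : SimpleGraph V) (r q v : V) : Prop := G.Adj q v ∧ G.dist r v = G.dist r q + 1

@[simp] lemma isAncestor_refl (r a : V) : G.IsAncestor r a a := by simp [IsAncestor]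

@[simp] lemma isAncestor_root (r a : V) : G.IsAncestor r r a := by simp [IsAncestor]

lemma IsAncestor.dist_le {r a v : V} (h : G.IsAncestor r a v) : G.dist r a ≤ G.dist r v := by
  unfold IsAncestor at h; omega

lemma IsParent.isAncestor {r q v : V} (h : G.IsParent r q v) : G.IsAncestor r q v := by
  rw [IsAncestor, dist_eq_one_iff_adj.2 h.1, h.2]

namespace IsTree

variable (hG : G.IsTree)
include hG

lemma length_eq_dist_of_isPath {a b : V} {w : G.Walk a b} (hw : w.IsPath) :
    w.length = G.dist a b := by
  obtain ⟨s, hs⟩ := hG.connected.exists_walk_length_eq_dist a b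
  rw [(hG.existsUnique_path a b).unique hw (s.isPath_of_length_eq_dist hs), hs]

lemma mem_support_iff_dist_add_dist {a b x : V} {w : G.Walk a b} (hw : w.IsPath) :
    x ∈ w.support ↔ G.dist a x + G.dist x b = G.dist a b := by
  classical
  constructor
  · intro hx
    have hlen := congrArg Walk.length (w.take_spec hx)
    rw [Walk.length_append] at hlen
    have := dist_le (w.takeUntil x hx)
    have := dist_le (w.dropUntil x hx)
    have := hG.connected.dist_triangle (u := a) (v := x) (w := b)
    have := hG.length_eq_dist_of_isPath hw
    omega
  · intro hx
    obtain ⟨w₁, hw₁⟩ := hG.connected.exists_walk_length_eq_dist a x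
    obtain ⟨w₂, hw₂⟩ := hG.connected.exists_walk_length_eq_dist x b
    have hlen : (w₁.append w₂).length = G.dist a b := by rw [Walk.length_append, hw₁, hw₂, hx]
    rw [(hG.existsUnique_path a b).unique hw ((w₁.append w₂).isPath_of_length_eq_dist hlen)]
    simp [Walk.mem_support_append_iff]

lemma connSet_of_forall_dist_add_dist {S : Set V} {u : V} (hu : u ∈ S)
    (hS : ∀ x ∈ S, ∀ y, G.dist u y + G.dist y x = G.dist u x → y ∈ S) : ConnSet G S := by
  refine induce_connected_of_patches u hu fun {x} hx => ?_
  obtain ⟨w, hw⟩ := hG.connected.exists_walk_length_eq_dist u x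
  have hpath := w.isPath_of_length_eq_dist hw
  refine ⟨{y | y ∈ w.support}, fun y hy => ?_, w.start_mem_support, w.end_mem_support,
    Walk.connected_induce_support w _ _⟩
  exact hS x hx y ((hG.mem_support_iff_dist_add_dist hpath).1 hy)

lemma connSet_segment (a b : V) : ConnSet G {x | G.dist a x + G.dist x b = G.dist a b} := by
  refine hG.connSet_of_forall_dist_add_dist (u := a) (by simp) fun x hx y hy => ?_
  have := hG.connected.dist_triangle (u := y) (v := x) (w := b)
  have := hG.connected.dist_triangle (u := a) (v := y) (w := b)
  simp only [Set.mem_ofPred_eq] at hx ⊢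
  omega

lemma ncard_segment_le (a b : V) :
    {x | G.dist a x + G.dist x b = G.dist a b}.ncard ≤ G.dist a b + 1 := by
  classical
  obtain ⟨w, hw⟩ := hG.connected.exists_walk_length_eq_dist a b
  have hpath := w.isPath_of_length_eq_dist hw
  calc {x | G.dist a x + G.dist x b = G.dist a b}.ncard
      = (w.support.toFinset : Set V).ncard := by
        congr 1; ext x; simp [hG.mem_support_iff_dist_add_dist hpath]
    _ ≤ w.support.length := (Set.ncard_coe_finset _).trans_le (List.toFinset_card_le _)
    _ = G.dist a b + 1 := by rw [Walk.length_support, hw]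

variable {r : V}

lemma isAncestor_trans {a b c : V} (h₁ : G.IsAncestor r a b) (h₂ : G.IsAncestor r b c) :
    G.IsAncestor r a c := by
  unfold IsAncestor at *
  have := hG.connected.dist_triangle (u := a) (v := b) (w := c)
  have := hG.connected.dist_triangle (u := r) (v := a) (w := c)
  omega

lemma eq_of_isAncestor_of_dist_le {a b : V} (h : G.IsAncestor r a b)
    (hd : G.dist r b ≤ G.dist r a) : a = b := by
  unfold IsAncestor at h
  exact hG.connected.dist_eq_zero_iff.1 (by omega)

lemma isAncestor_antisymm {a b : V} (h₁ : G.IsAncestor r a b) (h₂ : G.IsAncestor r b a) : a = b :=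
  hG.eq_of_isAncestor_of_dist_le h₁ h₂.dist_le

lemma isAncestor_of_segment {u v x : V} (huv : G.IsAncestor r u v)
    (hx : G.dist u x + G.dist x v = G.dist u v) : G.IsAncestor r u x ∧ G.IsAncestor r x v := by
  unfold IsAncestor at *
  have := hG.connected.dist_triangle (u := r) (v := u) (w := x)
  have := hG.connected.dist_triangle (u := r) (v := x) (w := v)
  omega

lemma isAncestor_total {a b v : V} (ha : G.IsAncestor r a v) (hb : G.IsAncestor r b v) :
    G.IsAncestor r a b ∨ G.IsAncestor r b a := by
  classical
  obtain ⟨w, hw⟩ := hG.connected.exists_walk_length_eq_dist r v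
  have hpath := w.isPath_of_length_eq_dist hw
  have hav : a ∈ w.support := (hG.mem_support_iff_dist_add_dist hpath).2 ha
  have hbv : b ∈ w.support := (hG.mem_support_iff_dist_add_dist hpath).2 hb
  have htake := hG.length_eq_dist_of_isPath (hpath.takeUntil hav)
  have hdrop := hG.length_eq_dist_of_isPath (hpath.dropUntil hav)
  have hlen := congrArg Walk.length (w.take_spec hav)
  rw [Walk.length_append] at hlen
  rw [← w.take_spec hav, Walk.mem_support_append_iff] at hbv
  unfold IsAncestor at *
  rcases hbv with hb' | hb'
  · have := (hG.mem_support_iff_dist_add_dist (hpath.takeUntil hav)).1 hb'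
    omega
  · have := (hG.mem_support_iff_dist_add_dist (hpath.dropUntil hav)).1 hb'
    omega

lemma exists_isParent {v : V} (hv : v ≠ r) : ∃ q, G.IsParent r q v := by
  obtain ⟨w, hw⟩ := hG.connected.exists_walk_length_eq_dist v r
  have hnil : ¬ w.Nil := Walk.not_nil_of_ne hv
  refine ⟨w.snd, (w.adj_snd hnil).symm, ?_⟩
  have hsnd : G.dist r w.snd + 1 ≤ G.dist r v := by
    rw [dist_comm, dist_comm (u := r), ← hw, ← w.length_tail_add_one hnil]
    exact Nat.add_le_add_right (dist_le w.tail) 1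
  rcases hG.dist_eq_dist_add_one_of_adj r (w.adj_snd hnil) with h | h <;> omega

lemma isParent_or_isParent_of_adj {a b : V} (h : G.Adj a b) :
    G.IsParent r a b ∨ G.IsParent r b a := by
  rcases hG.dist_eq_dist_add_one_of_adj r h with h' | h'
  · exact Or.inr ⟨h.symm, h'⟩
  · exact Or.inl ⟨h, h'⟩

lemma isAncestor_of_isParent {a q v : V} (ha : G.IsAncestor r a v) (hav : a ≠ v)
    (hq : G.IsParent r q v) : G.IsAncestor r a q := by
  rcases hG.isAncestor_total ha hq.isAncestor with h | h
  · exact h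
  · have hlt : G.dist r a < G.dist r v :=
      lt_of_not_ge fun hle => hav (hG.eq_of_isAncestor_of_dist_le ha hle)
    rw [hG.eq_of_isAncestor_of_dist_le h (by have := hq.2; omega)]
    exact isAncestor_refl r a

lemma isParent_unique {q q' v : V} (hq : G.IsParent r q v) (hq' : G.IsParent r q' v) :
    q = q' := by
  have := hq.2
  have := hq'.2
  rcases hG.isAncestor_total hq.isAncestor hq'.isAncestor with h | h
  exacts [hG.eq_of_isAncestor_of_dist_le h (by omega),
    (hG.eq_of_isAncestor_of_dist_le h (by omega)).symm]

end IsTree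

variable {r : V} {ν : V → ℕ}

/-- An arbitrary vertex when `v = r`. -/
noncomputable def parent (G : SimpleGraph V) (r v : V) : V :=
  have : Nonempty V := ⟨v⟩
  Classical.epsilon (G.IsParent r · v)

def IsLevelTop (G : SimpleGraph V) (r : V) (ν : V → ℕ) (a v : V) : Prop :=
  G.IsAncestor r a v ∧ ν a = ν v ∧ ∀ b, G.IsAncestor r b v → ν b = ν v → G.IsAncestor r a b

noncomputable def levelTop (G : SimpleGraph V) (r : V) (ν : V → ℕ) (v : V) : V :=
  have : Nonempty V := ⟨v⟩
  Classical.epsilon (G.IsLevelTop r ν · v)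

noncomputable abbrev levelTreeRoot (G : SimpleGraph V) (r : V) (ν : V → ℕ) :
    Set.range (G.levelTop r ν) :=
  ⟨G.levelTop r ν r, Set.mem_range_self r⟩

/-- The tree obtained from `G` by contracting every level class `{x | levelTop x = t}` to `t`. -/
noncomputable def levelTree (G : SimpleGraph V) (r : V) (ν : V → ℕ) :
    SimpleGraph (Set.range (G.levelTop r ν)) :=
  parentGraph (fun t => ⟨G.levelTop r ν (G.parent r t), Set.mem_range_self _⟩)
    (G.levelTreeRoot r ν)

def levelBags (G : SimpleGraph V) (r : V) (ν : V → ℕ) (t : Set.range (G.levelTop r ν)) :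
    Set V :=
  {x | G.levelTop r ν x = t}

namespace IsTree

variable (hG : G.IsTree)
include hG

lemma isParent_parent {v : V} (hv : v ≠ r) : G.IsParent r (G.parent r v) v :=
  Classical.epsilon_spec (hG.exists_isParent hv)

/-- The ancestor of `v` of least depth among those with the same `ν`-value. -/
lemma exists_isLevelTop (r : V) (ν : V → ℕ) (v : V) : ∃ a, G.IsLevelTop r ν a v := by
  classical
  have hex : ∃ i a, G.IsAncestor r a v ∧ ν a = ν v ∧ G.dist r a = i := ⟨_, v, by simp, rfl, rfl⟩
  obtain ⟨a, hav, hνa, hda⟩ := Nat.find_spec hex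
  refine ⟨a, hav, hνa, fun b hbv hνb => ?_⟩
  rcases hG.isAncestor_total hav hbv with h | h
  · exact h
  · have := Nat.find_min' hex ⟨b, hbv, hνb, rfl⟩
    rw [hG.eq_of_isAncestor_of_dist_le h (by omega)]
    exact isAncestor_refl r a

lemma isLevelTop_levelTop (v : V) : G.IsLevelTop r ν (G.levelTop r ν v) v :=
  Classical.epsilon_spec (hG.exists_isLevelTop r ν v)

lemma levelTop_eq_of_isAncestor {a v : V} (hav : G.IsAncestor r a v) (hν : ν a = ν v) :
    G.levelTop r ν a = G.levelTop r ν v := by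
  obtain ⟨hta, hνta, htopa⟩ := hG.isLevelTop_levelTop (r := r) (ν := ν) a
  obtain ⟨htv, hνtv, htopv⟩ := hG.isLevelTop_levelTop (r := r) (ν := ν) v
  have hva : G.IsAncestor r (G.levelTop r ν v) a := htopv a hav hν
  exact hG.isAncestor_antisymm (htopa _ hva (hνtv.trans hν.symm))
    (htopv _ (hG.isAncestor_trans hta hav) (hνta.trans hν))

lemma levelTop_levelTop (v : V) : G.levelTop r ν (G.levelTop r ν v) = G.levelTop r ν v :=
  hG.levelTop_eq_of_isAncestor (hG.isLevelTop_levelTop v).1 (hG.isLevelTop_levelTop v).2.1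

lemma levelTop_root : G.levelTop r ν r = r :=
  hG.eq_of_isAncestor_of_dist_le (hG.isLevelTop_levelTop r).1 (by simp)

lemma levelBags_subset (t : Set.range (G.levelTop r ν)) :
    G.levelBags r ν t ⊆ {x | G.IsAncestor r t x ∧ ν x = ν t} := by
  rintro x (hx : G.levelTop r ν x = t)
  rw [← hx]
  exact ⟨(hG.isLevelTop_levelTop x).1, (hG.isLevelTop_levelTop x).2.1.symm⟩

variable (hmono : ∀ a v, G.IsAncestor r a v → ν v ≤ ν a)
include hmono

lemma lt_of_isParent_levelTop {q v : V} (hq : G.IsParent r q (G.levelTop r ν v)) : ν v < ν q := by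
  obtain ⟨htv, hνtv, htop⟩ := hG.isLevelTop_levelTop (r := r) (ν := ν) v
  refine lt_of_le_of_ne (hνtv ▸ hmono _ _ hq.isAncestor) fun hνq => hq.1.ne ?_
  exact hG.isAncestor_antisymm hq.isAncestor
    (htop q (hG.isAncestor_trans hq.isAncestor htv) hνq.symm)

lemma levelTop_eq_self_of_isParent {g g' : V} (hg : G.IsParent r g g') (hν : ν g' ≠ ν g) :
    G.levelTop r ν g' = g' := by
  obtain ⟨ht, hνt, -⟩ := hG.isLevelTop_levelTop (r := r) (ν := ν) g'
  by_contra hne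
  have := hmono _ _ (hG.isAncestor_of_isParent ht hne hg)
  have := hmono _ _ hg.isAncestor
  omega


lemma levelTree_potential_lt (t : Set.range (G.levelTop r ν))
    (ht : t ≠ G.levelTreeRoot r ν) :
    ν r - ν (G.levelTop r ν (G.parent r t)) < ν r - ν t := by
  obtain ⟨_, v, rfl⟩ := t
  have hvr : G.levelTop r ν v ≠ r := fun h => ht (Subtype.ext (by simp [h, hG.levelTop_root]))
  have hq := hG.isParent_parent hvr
  have := hG.lt_of_isParent_levelTop hmono hq
  have := hmono _ _ (isAncestor_root r (G.parent r (G.levelTop r ν v)))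
  have := (hG.isLevelTop_levelTop (r := r) (ν := ν) (G.parent r (G.levelTop r ν v))).2.1
  have := (hG.isLevelTop_levelTop (r := r) (ν := ν) v).2.1
  show ν r - ν (G.levelTop r ν (G.parent r (G.levelTop r ν v))) < ν r - ν (G.levelTop r ν v)
  omega

lemma levelTree_isTree : (G.levelTree r ν).IsTree :=
  parentGraph_isTree (ρ := fun t : Set.range (G.levelTop r ν) => ν r - ν t)
    (hG.levelTree_potential_lt hmono)

lemma levelTree_dist_le (t : Set.range (G.levelTop r ν)) :
    (G.levelTree r ν).dist (G.levelTreeRoot r ν) t ≤ ν r - ν t :=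
  parentGraph_dist_le (ρ := fun t : Set.range (G.levelTop r ν) => ν r - ν t)
    (hG.levelTree_potential_lt hmono) t

lemma levelTree_adj {v : V} (hv : G.levelTop r ν v = v) (hvr : v ≠ r) :
    (G.levelTree r ν).Adj ⟨v, v, hv⟩ ⟨G.levelTop r ν (G.parent r v), Set.mem_range_self _⟩ := by
  refine parentGraph_adj_parent (ρ := fun t : Set.range (G.levelTop r ν) => ν r - ν t)
    (hG.levelTree_potential_lt hmono) fun h => hvr ?_
  simpa [hG.levelTop_root] using congrArg Subtype.val h

lemma exists_levelBags_of_isParent {g g' : V} (hg : G.IsParent r g g') :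
    ∃ t t', reflAdj (G.levelTree r ν) t t' ∧ g ∈ G.levelBags r ν t ∧ g' ∈ G.levelBags r ν t' := by
  set top := G.levelTop r ν
  by_cases hν : ν g' = ν g
  · refine ⟨⟨top g, g, rfl⟩, ⟨top g, g, rfl⟩, Or.inl rfl, rfl, ?_⟩
    exact hG.levelTop_eq_of_isAncestor hg.isAncestor hν.symm |>.symm
  · have htop : top g' = g' := hG.levelTop_eq_self_of_isParent hmono hg hν
    have hg'r : g' ≠ r := fun h => by have := hg.2; simp [h] at this
    have hpar : G.parent r g' = g := hG.isParent_unique (hG.isParent_parent hg'r) hg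
    refine ⟨⟨top g, g, rfl⟩, ⟨g', g', htop⟩, Or.inr ?_, rfl, htop⟩
    convert (hG.levelTree_adj hmono htop hg'r).symm using 2
    rw [hpar]

lemma isDeconstruction_levelBags : IsDeconstruction G (G.levelTree r ν) (G.levelBags r ν) := by
  refine ⟨fun g g' hgg' => ?_, fun g => ?_⟩
  · rcases hgg' with rfl | hadj
    · exact ⟨⟨_, g, rfl⟩, ⟨_, g, rfl⟩, Or.inl rfl, Or.inl rfl, Or.inl rfl⟩
    rcases hG.isParent_or_isParent_of_adj (r := r) hadj with hg | hg
    · obtain ⟨t, t', htt', hgt, hgt'⟩ := hG.exists_levelBags_of_isParent hmono hg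
      exact ⟨t, t', htt', Or.inl hgt, Or.inr hgt'⟩
    · obtain ⟨t, t', htt', hgt, hgt'⟩ := hG.exists_levelBags_of_isParent hmono hg
      exact ⟨t, t', htt', Or.inr hgt', Or.inl hgt⟩
  · have : {t | g ∈ G.levelBags r ν t} = {⟨_, g, rfl⟩} := by
      ext t
      simp [levelBags, Subtype.ext_iff, eq_comm]
    rw [this]
    exact connSet_singleton_s5 _

theorem exists_deconstruction_of_levels [Fintype V] {h w : ℕ} (hh : ∀ v, ν r ≤ ν v + h)
    (hw : ∀ t, {x | G.IsAncestor r t x ∧ ν x = ν t}.ncard ≤ w) :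
    ∃ T ∈ classTd h, ∃ B : Fin T.n → Set V,
      IsDeconstruction G T.G B ∧ DeconWidthLE T.G B (2 * w) := by
  classical
  refine exists_mem_classTd_of_isTree (hG.levelTree_isTree hmono) (G.levelTreeRoot r ν)
    (fun t => ?_) (hG.isDeconstruction_levelBags hmono) (fun t t' _ => ?_)
  · have := hh t
    exact (hG.levelTree_dist_le hmono t).trans (by omega)
  · have := (Set.ncard_le_ncard (hG.levelBags_subset t)).trans (hw t)
    have := (Set.ncard_le_ncard (hG.levelBags_subset t')).trans (hw t')
    have := Set.ncard_union_le (G.levelBags r ν t) (G.levelBags r ν t')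
    omega

end IsTree

end SimpleGraph

section KAryTree

variable {h j k : ℕ}

lemma kAryTree_adj {a b : {l : List (Fin k) // l.length ≤ h}} :
    (kAryTree h k).Adj a b ↔ a ≠ b ∧ ((∃ i, b.1 = i :: a.1) ∨ ∃ i, a.1 = i :: b.1) :=
  fromRel_adj _ a b

def kAryTreeRoot (h k : ℕ) : {l : List (Fin k) // l.length ≤ h} := ⟨[], Nat.zero_le h⟩

def kAryTreeEmbedding (hhj : h ≤ j) : kAryTree h k ↪g kAryTree j k where
  toFun l := ⟨l.1, l.2.trans hhj⟩
  inj' a b hab := Subtype.ext (by simpa using congrArg Subtype.val hab)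
  map_rel_iff' {a b} := by
    simp only [kAryTree_adj, ne_eq, Subtype.ext_iff]
    rfl

end KAryTree

section MinorMap

variable {α β γ : Type} {M : SimpleGraph α} {M' : SimpleGraph γ} {G : SimpleGraph β}
  {μ : α → Set β}

lemma IsMinorMap.comp_embedding (hμ : IsMinorMap M G μ) (f : M' ↪g M) :
    IsMinorMap M' G (μ ∘ f) :=
  ⟨fun m => hμ.1 (f m), fun _ _ hne => hμ.2.1 _ _ (f.injective.ne hne),
    fun _ _ hadj => hμ.2.2 _ _ (f.map_rel_iff.2 hadj)⟩

lemma IsMinorMap.update_union [DecidableEq α] (hμ : IsMinorMap M G μ) {m : α} {S : Set β}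
    (hS : ConnSet G S) (hmeet : (μ m ∩ S).Nonempty) (hdisj : ∀ m', m' ≠ m → Disjoint S (μ m')) :
    IsMinorMap M G (Function.update μ m (μ m ∪ S)) := by
  have hsub : ∀ m', μ m' ⊆ Function.update μ m (μ m ∪ S) m' := fun m' => by
    rcases eq_or_ne m' m with rfl | h
    · simp
    · simp [h]
  refine ⟨fun m' => ?_, fun m₁ m₂ hne => ?_, fun m₁ m₂ hadj => ?_⟩
  · rcases eq_or_ne m' m with rfl | h
    · simpa using (hμ.1 m').union hS hmeet
    · simpa [h] using hμ.1 m'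
  · rcases eq_or_ne m₁ m with rfl | h₁ <;> rcases eq_or_ne m₂ m₁ with rfl | h₂
    · exact absurd rfl hne
    · simpa [h₂] using ⟨hμ.2.1 _ _ hne, hdisj m₂ h₂⟩
    · exact absurd rfl hne
    · rcases eq_or_ne m₂ m with rfl | h₃
      · simpa [h₁] using ⟨hμ.2.1 _ _ hne, (hdisj m₁ h₁).symm⟩
      · simpa [h₁, h₃] using hμ.2.1 _ _ hne
  · obtain ⟨g, hg, g', hg', hgg'⟩ := hμ.2.2 m₁ m₂ hadj
    exact ⟨g, hsub m₁ hg, g', hsub m₂ hg', hgg'⟩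

end MinorMap

section Graft

variable {V : Type} {G : SimpleGraph V} {j k : ℕ}

/-- Branch sets for `T_{j+1,k}`: `R` at the root and `μ i` on the copy of `T_{j,k}` below the
child `[i]`. Strings grow at the front, so that copy consists of the strings ending in `i`. -/
def graft (R : Set V) (μ : Fin k → {l : List (Fin k) // l.length ≤ j} → Set V)
    (l : {l : List (Fin k) // l.length ≤ j + 1}) : Set V :=
  if h : l.1 = [] then R
  else μ (l.1.getLast h) ⟨l.1.dropLast, by have := l.2; simp only [List.length_dropLast]; omega⟩

variable {R : Set V} {μ : Fin k → {l : List (Fin k) // l.length ≤ j} → Set V}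

lemma graft_of_eq_nil {l : {l : List (Fin k) // l.length ≤ j + 1}} (h : l.1 = []) :
    graft R μ l = R := by
  simp [graft, h]

lemma graft_of_ne_nil {l : {l : List (Fin k) // l.length ≤ j + 1}} (h : l.1 ≠ [])
    {i : Fin k} {t : {l : List (Fin k) // l.length ≤ j}} (hi : l.1.getLast h = i)
    (ht : l.1.dropLast = t.1) : graft R μ l = μ i t := by
  subst hi
  simp only [graft, h, dite_false]
  exact congrArg _ (Subtype.ext ht)

lemma graft_subset {S : Set V} (hR : R ⊆ S) (hμ : ∀ i t, μ i t ⊆ S) (l) : graft R μ l ⊆ S := by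
  unfold graft
  split_ifs
  exacts [hR, hμ _ _]

lemma exists_adj_graft (hμ : ∀ i, IsMinorMap (kAryTree j k) G (μ i))
    (hedge : ∀ i, ∃ x ∈ R, ∃ y ∈ μ i (kAryTreeRoot j k), G.Adj x y)
    {a b : {l : List (Fin k) // l.length ≤ j + 1}} {i : Fin k} (hb : b.1 = i :: a.1) :
    ∃ x ∈ graft R μ a, ∃ y ∈ graft R μ b, G.Adj x y := by
  have hbne : b.1 ≠ [] := by simp [hb]
  by_cases ha : a.1 = []
  · rw [graft_of_eq_nil ha, graft_of_ne_nil hbne (i := i) (t := kAryTreeRoot j k) (by simp [hb, ha])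
      (by simp [hb, ha, kAryTreeRoot])]
    exact hedge i
  · have hlen : a.1.length = a.1.dropLast.length + 1 := by
      rw [List.length_dropLast]; have := List.length_pos_iff.2 ha; omega
    have hta : a.1.dropLast.length ≤ j := by have := a.2; omega
    have htb : (i :: a.1.dropLast).length ≤ j := by
      have := b.2
      simp only [hb, List.length_cons] at this ⊢
      omega
    have hadj : (kAryTree j k).Adj ⟨a.1.dropLast, hta⟩ ⟨i :: a.1.dropLast, htb⟩ :=
      kAryTree_adj.2 ⟨fun h => by simpa using congrArg (List.length ∘ Subtype.val) h,
        Or.inl ⟨i, rfl⟩⟩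
    rw [graft_of_ne_nil ha (t := ⟨_, hta⟩) rfl rfl,
      graft_of_ne_nil hbne (i := a.1.getLast ha) (t := ⟨_, htb⟩)
        (by simp [hb, List.getLast_cons ha]) (by simp [hb, List.dropLast_cons_of_ne_nil ha])]
    exact (hμ _).2.2 _ _ hadj

lemma isMinorMap_graft (hμ : ∀ i, IsMinorMap (kAryTree j k) G (μ i))
    (hdisj : ∀ i i', i ≠ i' → ∀ t t', Disjoint (μ i t) (μ i' t'))
    (hR : ConnSet G R) (hRdisj : ∀ i t, Disjoint R (μ i t))
    (hedge : ∀ i, ∃ x ∈ R, ∃ y ∈ μ i (kAryTreeRoot j k), G.Adj x y) :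
    IsMinorMap (kAryTree (j + 1) k) G (graft R μ) := by
  refine ⟨fun l => ?_, fun m m' hne => ?_, fun a b hab => ?_⟩
  · unfold graft
    split_ifs
    exacts [hR, (hμ _).1 _]
  · by_cases hm : m.1 = [] <;> by_cases hm' : m'.1 = []
    · exact absurd (Subtype.ext (hm.trans hm'.symm)) hne
    · rw [graft_of_eq_nil hm]
      simp only [graft, dif_neg hm']
      exact hRdisj _ _
    · rw [graft_of_eq_nil hm']
      simp only [graft, dif_neg hm]
      exact (hRdisj _ _).symm
    · simp only [graft, dif_neg hm, dif_neg hm']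
      by_cases hi : m.1.getLast hm = m'.1.getLast hm'
      · rw [hi]
        refine (hμ _).2.1 _ _ fun ht => hne (Subtype.ext ?_)
        rw [← List.dropLast_append_getLast hm, ← List.dropLast_append_getLast hm', hi]
        exact congrArg (· ++ _) (congrArg Subtype.val ht)
      · exact hdisj _ _ hi _ _
  · rcases (kAryTree_adj.1 hab).2 with ⟨i, hi⟩ | ⟨i, hi⟩
    · exact exists_adj_graft hμ hedge hi
    · obtain ⟨x, hx, y, hy, hxy⟩ := exists_adj_graft hμ hedge hi
      exact ⟨y, hy, x, hx, hxy.symm⟩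

end Graft

namespace SimpleGraph

variable {V : Type} {G : SimpleGraph V} {r : V} {k j : ℕ}

def KAryMinorBelow (G : SimpleGraph V) (r : V) (k j : ℕ) (v : V) : Prop :=
  ∃ μ : {l : List (Fin k) // l.length ≤ j} → Set V, IsMinorMap (kAryTree j k) G μ ∧
    v ∈ μ (kAryTreeRoot j k) ∧ ∀ t, μ t ⊆ {x | G.IsAncestor r v x}

lemma kAryMinorBelow_zero (v : V) : G.KAryMinorBelow r k 0 v := by
  have hsub (a b : {l : List (Fin k) // l.length ≤ 0}) : a = b :=
    Subtype.ext ((List.length_eq_zero_iff.1 (Nat.le_zero.1 a.2)).trans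
      (List.length_eq_zero_iff.1 (Nat.le_zero.1 b.2)).symm)
  refine ⟨fun _ => {v}, ⟨fun _ => connSet_singleton_s5 v, fun m m' hne => absurd (hsub m m') hne,
    fun m m' hadj => absurd (hsub m m') hadj.ne⟩, rfl, ?_⟩
  rintro t x rfl
  exact isAncestor_refl r x

lemma KAryMinorBelow.mono {i : ℕ} {v : V} (h : G.KAryMinorBelow r k j v) (hij : i ≤ j) :
    G.KAryMinorBelow r k i v := by
  obtain ⟨μ, hμ, hroot, hsub⟩ := h
  exact ⟨μ ∘ kAryTreeEmbedding hij, hμ.comp_embedding _, hroot, fun t => hsub _⟩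

lemma IsTree.kAryMinorBelow_of_isAncestor (hG : G.IsTree) {u v : V} (huv : G.IsAncestor r u v)
    (h : G.KAryMinorBelow r k j v) : G.KAryMinorBelow r k j u := by
  classical
  obtain ⟨μ, hμ, hroot, hsub⟩ := h
  set S := {x | G.dist u x + G.dist x v = G.dist u v}
  have hS : ∀ x ∈ S, G.IsAncestor r u x ∧ G.IsAncestor r x v := fun x hx =>
    hG.isAncestor_of_segment huv hx
  refine ⟨Function.update μ (kAryTreeRoot j k) (μ (kAryTreeRoot j k) ∪ S),
    hμ.update_union (hG.connSet_segment u v) ⟨v, hroot, by simp [S]⟩ fun t ht => ?_,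
    by simp [S], fun t x hx => ?_⟩
  · refine Set.disjoint_left.2 fun x hxS hxt => ?_
    have := hG.isAncestor_antisymm (hS x hxS).2 (hsub t hxt)
    subst this
    exact Set.disjoint_left.1 (hμ.2.1 _ _ ht) hxt hroot
  · rcases eq_or_ne t (kAryTreeRoot j k) with rfl | ht
    · simp only [Function.update_self] at hx
      rcases hx with hx | hx
      · exact hG.isAncestor_trans huv (hsub _ hx)
      · exact (hS x hx).1
    · simp only [Function.update_of_ne ht] at hx
      exact hG.isAncestor_trans huv (hsub _ hx)

/-- The root branch set is the part of the subtree of `u` outside the subtrees of the `f i`. -/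
lemma IsTree.kAryMinorBelow_succ (hG : G.IsTree) {u : V} (f : Fin k → V)
    (hf : ∀ i, G.IsAncestor r u (f i) ∧ f i ≠ u)
    (hanti : Pairwise fun i i' => ¬ G.IsAncestor r (f i) (f i'))
    (hgood : ∀ i, G.KAryMinorBelow r k j (f i)) : G.KAryMinorBelow r k (j + 1) u := by
  choose μ hμ hroot hsub using hgood
  set R := {x | G.IsAncestor r u x ∧ ∀ i, ¬ G.IsAncestor r (f i) x}
  have hRdisj : ∀ i t, Disjoint R (μ i t) :=
    fun i t => Set.disjoint_left.2 fun x hx hxt => hx.2 i (hsub i t hxt)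
  have huR : u ∈ R :=
    ⟨isAncestor_refl r u, fun i hi => (hf i).2 (hG.isAncestor_antisymm hi (hf i).1)⟩
  have hfr : ∀ i, f i ≠ r := fun i h =>
    (hf i).2 (hG.eq_of_isAncestor_of_dist_le (hf i).1 (by simp [h])).symm
  have hparR : ∀ i, G.parent r (f i) ∈ R := by
    intro i
    have hq := hG.isParent_parent (hfr i)
    refine ⟨hG.isAncestor_of_isParent (hf i).1 (hf i).2.symm hq, fun i' hi' => ?_⟩
    rcases eq_or_ne i' i with rfl | hii'
    · exact hq.1.ne (hG.isAncestor_antisymm hq.isAncestor hi')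
    · exact hanti hii' (hG.isAncestor_trans hi' hq.isAncestor)
  have hR : ConnSet G R := by
    refine hG.connSet_of_forall_dist_add_dist huR fun x hx y hy => ?_
    obtain ⟨huy, hyx⟩ := hG.isAncestor_of_segment hx.1 hy
    exact ⟨huy, fun i hi => hx.2 i (hG.isAncestor_trans hi hyx)⟩
  refine ⟨graft R μ, isMinorMap_graft hμ (fun i i' hii' t t' => ?_) hR hRdisj (fun i => ?_), ?_, ?_⟩
  · refine Set.disjoint_left.2 fun x hx hx' => ?_
    rcases hG.isAncestor_total (hsub i t hx) (hsub i' t' hx') with h | h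
    exacts [hanti hii' h, hanti hii'.symm h]
  · exact ⟨_, hparR i, f i, hroot i, (hG.isParent_parent (hfr i)).1⟩
  · rw [graft_of_eq_nil rfl]
    exact huR
  · exact graft_subset (fun x hx => hx.1) fun i t x hx => hG.isAncestor_trans (hf i).1 (hsub i t hx)

/-- A set of descendants of `t` with no `k`-antichain apart from `t` is covered by at most `k`
root paths below `t`, one to each of its maximal elements. -/
lemma IsTree.ncard_le_of_forall_not_antichain [Finite V] (hG : G.IsTree) {e : ℕ}
    (he : ∀ v, G.dist r v ≤ e) {t : V} {R : Set V} (hR : ∀ x ∈ R, G.IsAncestor r t x)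
    (hanti : ∀ f : Fin k → V, (∀ i, f i ∈ R ∧ f i ≠ t) →
      ¬ Pairwise fun i i' => ¬ G.IsAncestor r (f i) (f i')) :
    R.ncard ≤ k * (e + 1) := by
  classical
  have := Fintype.ofFinite V
  set M : Finset V := {m | m ∈ R ∧ ∀ x ∈ R, G.IsAncestor r m x → x = m}
  have hM : ∀ m ∈ M, m ∈ R ∧ ∀ x ∈ R, G.IsAncestor r m x → x = m :=
    fun m hm => (Finset.mem_filter.1 hm).2
  have hmax : ∀ x ∈ R, ∃ m ∈ M, G.IsAncestor r x m := by
    intro x hx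
    obtain ⟨m, hm, hdeep⟩ := ({y | y ∈ R ∧ G.IsAncestor r x y} : Finset V).exists_max_image
      (G.dist r) ⟨x, by simp [hx]⟩
    simp only [Finset.mem_filter, Finset.mem_univ, true_and] at hm hdeep
    refine ⟨m, Finset.mem_filter.2 ⟨Finset.mem_univ m, hm.1, fun y hy hmy => ?_⟩, hm.2⟩
    exact (hG.eq_of_isAncestor_of_dist_le hmy (hdeep y ⟨hy, hG.isAncestor_trans hm.2 hmy⟩)).symm
  have hMcard : M.card ≤ k := by
    by_contra! hk
    have hk' : k ≤ (M.erase t).card := by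
      have := Finset.pred_card_le_card_erase (s := M) (a := t)
      omega
    set f : Fin k → V := fun i => (M.erase t).equivFin.symm (Fin.castLE hk' i)
    have hfM : ∀ i, f i ∈ M ∧ f i ≠ t := fun i =>
      ⟨Finset.mem_of_mem_erase (Subtype.prop _), Finset.ne_of_mem_erase (Subtype.prop _)⟩
    refine hanti f (fun i => ⟨(hM _ (hfM i).1).1, (hfM i).2⟩) fun i i' hii' hanc => hii' ?_
    have := (hM _ (hfM i).1).2 _ (hM _ (hfM i').1).1 hanc
    simpa [f, Fin.ext_iff] using this.symm
  have hcover : R ⊆ ⋃ m ∈ M, {x | G.dist t x + G.dist x m = G.dist t m} := by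
    intro x hx
    obtain ⟨m, hm, hxm⟩ := hmax x hx
    have htm := hG.isAncestor_trans (hR x hx) hxm
    have htx := hR x hx
    simp only [Set.mem_iUnion, Set.mem_ofPred_eq]
    refine ⟨m, hm, ?_⟩
    unfold IsAncestor at hxm htm htx
    omega
  calc R.ncard ≤ (⋃ m ∈ M, {x | G.dist t x + G.dist x m = G.dist t m}).ncard :=
        Set.ncard_le_ncard hcover
    _ ≤ ∑ m ∈ M, {x | G.dist t x + G.dist x m = G.dist t m}.ncard := M.set_ncard_biUnion_le _
    _ ≤ ∑ m ∈ M, (e + 1) := Finset.sum_le_sum fun m hm => by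
        have := hG.ncard_segment_le t m
        have := hR m (hM m hm).1
        have := he m
        unfold IsAncestor at *
        omega
    _ ≤ k * (e + 1) := by rw [Finset.sum_const, smul_eq_mul]; exact Nat.mul_le_mul_right _ hMcard

/-- Junk (`sInf ∅ = 0`) when `v` carries models of every `T_{j,k}`. -/
noncomputable def kAryRank (G : SimpleGraph V) (r : V) (k : ℕ) (v : V) : ℕ :=
  sInf {j | ¬ G.KAryMinorBelow r k j v}

lemma kAryMinorBelow_iff_lt_kAryRank {d : ℕ} {v : V} (hd : ¬ G.KAryMinorBelow r k d v) {j : ℕ} :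
    G.KAryMinorBelow r k j v ↔ j < G.kAryRank r k v := by
  refine ⟨fun h => lt_of_not_ge fun hle => ?_, fun h => not_not.1 (Nat.notMem_of_lt_sInf h)⟩
  exact Nat.sInf_mem (s := {j | ¬ G.KAryMinorBelow r k j v}) ⟨d, hd⟩ (h.mono hle)

namespace IsTree

variable (hG : G.IsTree)
include hG

theorem exists_deconstruction_of_forall_not_isMinorMap [Fintype V] {d e : ℕ}
    (he : ∀ v, G.dist r v ≤ e) (hno : ∀ μ, ¬ IsMinorMap (kAryTree (d + 1) k) G μ) :
    ∃ T ∈ classTd d, ∃ B : Fin T.n → Set V,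
      IsDeconstruction G T.G B ∧ DeconWidthLE T.G B (2 * (k * (e + 1))) := by
  set ν := G.kAryRank r k
  have hnot : ∀ v, ¬ G.KAryMinorBelow r k (d + 1) v := fun v h => by
    obtain ⟨μ, hμ, -⟩ := hG.kAryMinorBelow_of_isAncestor (isAncestor_root r v) h
    exact hno μ hμ
  have hiff : ∀ v j, G.KAryMinorBelow r k j v ↔ j < ν v :=
    fun v j => kAryMinorBelow_iff_lt_kAryRank (hnot v)
  have hpos : ∀ v, 1 ≤ ν v := fun v => (hiff v 0).1 (kAryMinorBelow_zero v)
  have hmono : ∀ a v, G.IsAncestor r a v → ν v ≤ ν a := fun a v hav => by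
    by_contra! h
    exact (lt_irrefl (ν a)) ((hiff a _).1
      (hG.kAryMinorBelow_of_isAncestor hav ((hiff v _).2 h)))
  refine hG.exists_deconstruction_of_levels hmono (fun v => ?_) fun t => ?_
  · have := hpos v
    have : ν r ≤ d + 1 := not_lt.1 fun h => hnot r ((hiff r _).2 h)
    omega
  · refine hG.ncard_le_of_forall_not_antichain he (fun x hx => hx.1) fun f hf hanti => ?_
    have hgood : ∀ i, G.KAryMinorBelow r k (ν t - 1) (f i) := fun i =>
      (hiff _ _).2 (by rw [(hf i).1.2]; have := hpos t; omega)
    have := (hiff t _).1 (hG.kAryMinorBelow_succ f (fun i => ⟨(hf i).1.1, (hf i).2⟩) hanti hgood)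
    have := hpos t
    omega

end IsTree

end SimpleGraph

/-- if `𝒢` is a class of finite trees of stack depth `d`, each of
height at most `e`, then `𝒢 ≼ 𝒯_d`. -/
theorem stack_depth_decomps (d e : ℕ) (𝒢 : Set FinGraph)
    (htree : ∀ G ∈ 𝒢, G.G.IsTree)
    (hsd : HasStackDepth 𝒢 d)
    (hht : ∀ G ∈ 𝒢, treeHeightLE G e) :
    DeconLE 𝒢 (classTd d) := by
  obtain ⟨k, -, hk⟩ : ∃ k, 1 ≤ k ∧ ∀ G ∈ 𝒢, ∀ μ, ¬ IsMinorMap (kAryTree (d + 1) k) G.G μ := by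
    simpa [StackAll] using hsd.2
  refine ⟨2 * (k * (e + 1)), fun G hG => ?_⟩
  obtain ⟨r, hr⟩ := hht G hG
  exact (htree G hG).exists_deconstruction_of_forall_not_isMinorMap hr (hk G hG)
end

section
/- Suppose N, M and G are finite rooted trees, (ν(n))_{n ∈ V(N)} is a nice N-deconstruction of M, and (μ(m))_{m ∈ V(M)} is a nice M-deconstruction of G. Then (⋃_{m ∈ ν(n)} μ(m))_{n ∈ V(N)} is a nice N-deconstruction of G. -/
/-!
The bags of the composite are the unions `⋃ m ∈ ν n, μ m`. A union of connected sets indexed by a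
connected set of `M` is connected as soon as the sets of adjacent indices meet or are joined by an
edge: for the bags of the composite minor map this is edge-witnessing of `μ`; for the connectivity
condition, where `{n | g ∈ ⋃ m ∈ ν n, μ m}` is the union of the sets `{n | m ∈ ν n}` over the
connected set `{m | g ∈ μ m}`, it is coverage of `ν`. For niceness, disjointness of the `μ`-bags
together with coverage forces an edge of `G` between `μ m` and `μ m'` (with `m ≠ m'`) to lie over
an edge `m m'` of `M`, so the two child conditions compose.
-/

open SimpleGraph

open Set Function

variable {α β γ : Type}

lemma reflAdj.symm {H : SimpleGraph β} {h h' : β} (hh : reflAdj H h h') : reflAdj H h' h :=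
  hh.imp Eq.symm fun hadj => hadj.symm

lemma reflAdj.exists_of_mem_union {H : SimpleGraph β} {B : β → Set α} {h h' : β} {a b : α}
    (hh : reflAdj H h h') (ha : a ∈ B h ∪ B h') (hb : b ∈ B h ∪ B h') :
    ∃ k, a ∈ B k ∧ ∃ k', b ∈ B k' ∧ reflAdj H k k' := by
  rcases ha with ha | ha <;> rcases hb with hb | hb
  exacts [⟨h, ha, h, hb, Or.inl rfl⟩, ⟨h, ha, h', hb, hh⟩, ⟨h', ha, h, hb, hh.symm⟩,
    ⟨h', ha, h', hb, Or.inl rfl⟩]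

lemma ConnSet.union_of_reflAdj_s6 {G : SimpleGraph α} {s t : Set α} {a b : α}
    (hs : ConnSet G s) (ht : ConnSet G t) (ha : a ∈ s) (hb : b ∈ t) (hab : reflAdj G a b) :
    ConnSet G (s ∪ t) := by
  rcases hab with rfl | hab
  · exact induce_union_connected hs.preconnected ht.preconnected ⟨a, ha, hb⟩
  · exact connected_induce_union hs.preconnected ht.preconnected ha hb hab

section BiUnion

variable {M : SimpleGraph β} {G : SimpleGraph α} {μ : β → Set α} {s : Set β}

lemma exists_connSet_of_walk (hconn : ∀ m ∈ s, ConnSet G (μ m))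
    (hedge : ∀ m ∈ s, ∀ m' ∈ s, M.Adj m m' → ∃ g ∈ μ m, ∃ g' ∈ μ m', reflAdj G g g')
    {x y : s} (p : (M.induce s).Walk x y) :
    ∃ t ⊆ ⋃ m ∈ s, μ m, μ x ∪ μ y ⊆ t ∧ ConnSet G t := by
  induction p with
  | @nil u => exact ⟨μ u, subset_biUnion_of_mem u.2, (union_self _).subset, hconn u u.2⟩
  | @cons a b c hab p ih =>
    obtain ⟨t, htU, hbct, ht⟩ := ih
    obtain ⟨g, hg, g', hg', hgg'⟩ := hedge _ a.2 _ b.2 hab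
    exact ⟨μ a ∪ t, union_subset (subset_biUnion_of_mem a.2) htU,
      union_subset_union_right _ (subset_union_right.trans hbct),
      (hconn _ a.2).union_of_reflAdj_s6 ht hg (hbct (Or.inl hg')) hgg'⟩

lemma ConnSet.biUnion_s6 (hs : ConnSet M s) (hconn : ∀ m ∈ s, ConnSet G (μ m))
    (hedge : ∀ m ∈ s, ∀ m' ∈ s, M.Adj m m' → ∃ g ∈ μ m, ∃ g' ∈ μ m', reflAdj G g g') :
    ConnSet G (⋃ m ∈ s, μ m) := by
  obtain ⟨⟨m₀, hm₀⟩⟩ := Connected.nonempty hs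
  obtain ⟨⟨g₀, hg₀⟩⟩ := (hconn m₀ hm₀).nonempty
  refine induce_connected_of_patches g₀ (mem_biUnion hm₀ hg₀) fun {g} hg => ?_
  obtain ⟨m, hm, hgm⟩ := mem_iUnion₂.mp hg
  obtain ⟨p⟩ := Connected.preconnected hs ⟨m₀, hm₀⟩ ⟨m, hm⟩
  obtain ⟨t, htU, hsub, ht⟩ := exists_connSet_of_walk hconn hedge p
  exact ⟨t, htU, hsub (Or.inl hg₀), hsub (Or.inr hgm), ht.preconnected _ _⟩

end BiUnion

section Comp

variable {G : SimpleGraph α} {M : SimpleGraph β} {N : SimpleGraph γ}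
  {μ : β → Set α} {ν : γ → Set β}

theorem IsDeconstruction.comp (hν : IsDeconstruction M N ν) (hμ : IsDeconstruction G M μ) :
    IsDeconstruction G N (fun n => ⋃ m ∈ ν n, μ m) := by
  obtain ⟨hνcov, hνconn⟩ := hν
  obtain ⟨hμcov, hμconn⟩ := hμ
  refine ⟨fun g g' hgg' => ?_, fun g => ?_⟩
  · obtain ⟨m, m', hmm', hg, hg'⟩ := hμcov g g' hgg'
    obtain ⟨n, n', hnn', hm, hm'⟩ := hνcov m m' hmm'
    have hcover : μ m ∪ μ m' ⊆ (⋃ k ∈ ν n, μ k) ∪ ⋃ k ∈ ν n', μ k := by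
      rw [← biUnion_union]
      exact union_subset (subset_biUnion_of_mem hm) (subset_biUnion_of_mem hm')
    exact ⟨n, n', hnn', hcover hg, hcover hg'⟩
  · have hbags : {n | g ∈ ⋃ m ∈ ν n, μ m} = ⋃ m ∈ {m | g ∈ μ m}, {n | m ∈ ν n} := by
      ext; simp [and_comm]
    rw [hbags]
    refine (hμconn g).biUnion_s6 (fun m _ => hνconn m) fun m _ m' _ hmm' => ?_
    obtain ⟨n, n', hnn', hm, hm'⟩ := hνcov m m' (Or.inr hmm')
    exact hnn'.exists_of_mem_union hm hm'

theorem IsMinorMap.comp (hν : IsMinorMap N M ν) (hμ : IsMinorMap M G μ) :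
    IsMinorMap N G (fun n => ⋃ m ∈ ν n, μ m) := by
  obtain ⟨hνconn, hνdisj, hνedge⟩ := hν
  obtain ⟨hμconn, hμdisj, hμedge⟩ := hμ
  refine ⟨fun n => (hνconn n).biUnion_s6 (fun m _ => hμconn m) fun m _ m' _ hmm' => ?_,
    fun n n' hnn' => ?_, fun n n' hnn' => ?_⟩
  · obtain ⟨g, hg, g', hg', hgg'⟩ := hμedge m m' hmm'
    exact ⟨g, hg, g', hg', Or.inr hgg'⟩
  · simp only [disjoint_iUnion_left, disjoint_iUnion_right]
    intro m' hm' m hm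
    refine hμdisj m m' fun h => ?_
    subst h
    exact disjoint_left.mp (hνdisj n n' hnn') hm hm'
  · obtain ⟨m, hm, m', hm', hmm'⟩ := hνedge n n' hnn'
    obtain ⟨g, hg, g', hg', hgg'⟩ := hμedge m m' hmm'
    exact ⟨g, mem_biUnion hm hg, g', mem_biUnion hm' hg', hgg'⟩

end Comp

lemma IsMinorMap.pairwise_disjoint {M : SimpleGraph β} {G : SimpleGraph α} {μ : β → Set α}
    (hμ : IsMinorMap M G μ) : Pairwise (Disjoint on μ) :=
  hμ.2.1

theorem IsDeconstruction.reflAdj_of_mem {G : SimpleGraph α} {H : SimpleGraph β}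
    {B : β → Set α} (hB : IsDeconstruction G H B) (hdisj : Pairwise (Disjoint on B))
    {g g' : α} {h h' : β} (hg : g ∈ B h) (hg' : g' ∈ B h') (hgg' : reflAdj G g g') :
    reflAdj H h h' := by
  obtain ⟨k, k', hkk', hgk, hg'k⟩ := hB.1 g g' hgg'
  obtain ⟨l, hl, l', hl', hll'⟩ := hkk'.exists_of_mem_union hgk hg'k
  rwa [hdisj.eq (not_disjoint_iff.mpr ⟨g, hg, hl⟩), hdisj.eq (not_disjoint_iff.mpr ⟨g', hg', hl'⟩)]

/-- nice deconstructions of rooted trees compose: if `ν` is a nice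
`N`-deconstruction of `M` and `μ` is a nice `M`-deconstruction of `G`, then
`(⋃_{m ∈ ν n} μ m)_n` is a nice `N`-deconstruction of `G`. -/
theorem transitivity_niceness (N M G : RootedFinTree)
    (ν : Fin N.n → Set (Fin M.n)) (μ : Fin M.n → Set (Fin G.n))
    (hν : IsNiceDecon N M ν) (hμ : IsNiceDecon M G μ) :
    IsNiceDecon N G (fun x => ⋃ m ∈ ν x, μ m) := by
  have ⟨hνdec, hνmin, hνroot, hνchild⟩ := hν
  have ⟨hμdec, hμmin, hμroot, hμchild⟩ := hμ
  refine ⟨hνdec.comp hμdec, hνmin.comp hμmin, mem_biUnion hνroot hμroot, ?_⟩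
  intro n n' g g' hnn' hg hg' hgg'
  obtain ⟨m, hm, hgm⟩ := mem_iUnion₂.mp hg
  obtain ⟨m', hm', hgm'⟩ := mem_iUnion₂.mp hg'
  have hmm' : m ≠ m' := fun h =>
    hnn'.1.ne (hνmin.pairwise_disjoint.eq (not_disjoint_iff.mpr ⟨m, hm, h ▸ hm'⟩))
  have hadj : M.G.Adj m m' :=
    (hμdec.reflAdj_of_mem hμmin.pairwise_disjoint hgm hgm' (Or.inr hgg')).resolve_left hmm'
  exact hμchild m m' g g' (hνchild n n' m m' hnn' hm hm' hadj) hgm hgm' hgg'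
end

section
/- Suppose M and G are finite rooted trees and (μ(m))_{m ∈ V(M)} is a nice M-deconstruction of G. For all d ≥ 0 and k ≥ 1, if M has property P(d,k), then G has property P(d,k). -/
open SimpleGraph

/-! Each bag `μ m` is connected, so it has a highest vertex `top m`. By niceness, walking up
from a vertex of `G` to an ancestor either stays in a bag or climbs an edge of `M`, so ancestry
between vertices of `G` implies ancestry between their bags; conversely, the tops of a parent
and a child bag are comparable (both lie above the edge joining the bags), hence in the right
order. Thus `top` sends the root to the root and preserves and reflects ancestry, and such a
map carries every witness set for `P(d,k)` in `M` to one in `G`. -/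

namespace RootedFinTree

open Relation

variable {T : RootedFinTree} {a b c p v : Fin T.n}

theorem ancestor_refl (a : Fin T.n) : T.Ancestor a a := by
  simp [Ancestor]

theorem Ancestor.trans (hab : T.Ancestor a b) (hbc : T.Ancestor b c) : T.Ancestor a c := by
  unfold Ancestor at *
  have h₁ : T.G.dist a c ≤ T.G.dist a b + T.G.dist b c := T.isTree.connected.dist_triangle
  have h₂ : T.G.dist T.root c ≤ T.G.dist T.root a + T.G.dist a c :=
    T.isTree.connected.dist_triangle
  omega

theorem Ancestor.eq_of_dist_le (h : T.Ancestor a b)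
    (hle : T.G.dist T.root b ≤ T.G.dist T.root a) : a = b := by
  unfold Ancestor at h
  exact T.isTree.connected.dist_eq_zero_iff.mp (by omega)

theorem Ancestor.antisymm (hab : T.Ancestor a b) (hba : T.Ancestor b a) : a = b :=
  hab.eq_of_dist_le (by unfold Ancestor at hba; omega)

theorem IsChild.ancestor (h : T.IsChild p c) : T.Ancestor p c := by
  rw [Ancestor, dist_eq_one_iff_adj.mpr h.1, h.2]

theorem isChild_or_isChild_of_adj (h : T.G.Adj a b) : T.IsChild a b ∨ T.IsChild b a :=
  (T.isTree.dist_eq_dist_add_one_of_adj T.root h).symm.imp (⟨h, ·⟩) (⟨h.symm, ·⟩)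

theorem IsChild.unique {p' : Fin T.n} (h : T.IsChild p c) (h' : T.IsChild p' c) : p = p' := by
  obtain ⟨P, -, hP⟩ := T.isTree.connected.exists_path_of_dist T.root p
  obtain ⟨P', -, hP'⟩ := T.isTree.connected.exists_path_of_dist T.root p'
  have hpath : (P.concat h.1).IsPath :=
    Walk.isPath_of_length_eq_dist _ (by rw [Walk.length_concat, hP, h.2])
  have hpath' : (P'.concat h'.1).IsPath :=
    Walk.isPath_of_length_eq_dist _ (by rw [Walk.length_concat, hP', h'.2])
  have heq := congrArg Subtype.val
    ((T.isTree.isAcyclic.subsingleton_path T.root c).elim ⟨_, hpath⟩ ⟨_, hpath'⟩)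
  exact (Walk.concat_inj heq).1

/-- The first edge of a shortest walk from `v` to `a` leads to the parent of `v`. -/
theorem Ancestor.exists_isChild (h : T.Ancestor a v) (hne : a ≠ v) :
    ∃ p, T.IsChild p v ∧ T.Ancestor a p := by
  obtain ⟨w, hw⟩ := T.isTree.connected.exists_walk_length_eq_dist v a
  cases w with
  | nil => exact (hne rfl).elim
  | @cons _ p _ hvp q =>
    unfold Ancestor at h ⊢
    have hq : T.G.dist p a ≤ q.length := dist_le q
    have h₀ : T.G.dist T.root v ≤ T.G.dist T.root p + T.G.dist p v :=
      T.isTree.connected.dist_triangle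
    have h₁ : T.G.dist T.root p ≤ T.G.dist T.root a + T.G.dist a p :=
      T.isTree.connected.dist_triangle
    have h₂ : T.G.dist a v ≤ T.G.dist a p + T.G.dist p v := T.isTree.connected.dist_triangle
    have e₁ : T.G.dist p v = 1 := dist_eq_one_iff_adj.mpr hvp.symm
    have e₂ : T.G.dist a p = T.G.dist p a := dist_comm
    have e₃ : T.G.dist a v = T.G.dist v a := dist_comm
    rw [Walk.length_cons] at hw
    exact ⟨p, ⟨hvp.symm, by omega⟩, by omega⟩

theorem ancestor_iff_reflTransGen : T.Ancestor a v ↔ ReflTransGen T.IsChild a v := by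
  refine ⟨fun h => ?_, fun h => ?_⟩
  · induction hd : T.G.dist T.root v using Nat.strong_induction_on generalizing v with
    | _ n ih =>
      by_cases hav : a = v
      · exact hav ▸ ReflTransGen.refl
      obtain ⟨p, hpv, hap⟩ := h.exists_isChild hav
      exact (ih _ (by rw [← hd, hpv.2]; omega) hap rfl).tail hpv
  · induction h with
    | refl => exact ancestor_refl a
    | tail _ hbc ih => exact ih.trans hbc.ancestor

theorem Ancestor.total (hav : T.Ancestor a v) (hbv : T.Ancestor b v) :
    T.Ancestor a b ∨ T.Ancestor b a := by
  induction ancestor_iff_reflTransGen.mp hav with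
  | refl => exact Or.inr hbv
  | @tail p v hap hpv ih =>
    by_cases hbv' : b = v
    · exact Or.inl (hbv' ▸ ancestor_iff_reflTransGen.mpr (hap.tail hpv))
    obtain ⟨p', hp'v, hbp'⟩ := hbv.exists_isChild hbv'
    exact ih (ancestor_iff_reflTransGen.mpr hap) (hp'v.unique hpv ▸ hbp')

theorem Ancestor.eq_root (h : T.Ancestor a T.root) : a = T.root :=
  h.eq_of_dist_le (by simp)

/-- Take `t` of minimal depth in `S`: no edge inside `S` climbs above it. -/
theorem exists_ancestor_of_connSet {S : Set (Fin T.n)} (hS : ConnSet T.G S) :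
    ∃ t ∈ S, ∀ g ∈ S, T.Ancestor t g := by
  obtain ⟨⟨s, hs⟩⟩ := hS.nonempty
  obtain ⟨t, htS, hmin⟩ := S.exists_min_image (T.G.dist T.root) S.toFinite ⟨s, hs⟩
  have step : ∀ x y : S, (T.G.induce S).Adj x y → T.Ancestor t x → T.Ancestor t y := by
    intro x y hxy htx
    rcases isChild_or_isChild_of_adj hxy with hc | hc
    · exact htx.trans hc.ancestor
    · rcases htx.total hc.ancestor with hty | hyt
      · exact hty
      · exact hyt.eq_of_dist_le (hmin y y.2) ▸ ancestor_refl _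
  have below : ∀ g : S, T.Ancestor t g := fun g => by
    induction (reachable_iff_reflTransGen _ _).mp (hS.preconnected ⟨t, htS⟩ g) with
    | refl => exact ancestor_refl t
    | tail _ hxy ih => exact step _ _ hxy ih
  exact ⟨t, htS, fun g hg => below ⟨g, hg⟩⟩

end RootedFinTree

theorem PropP.map {T T' : RootedFinTree} {k : ℕ} (f : Fin T.n → Fin T'.n)
    (hf : ∀ a b, T'.Ancestor (f a) (f b) ↔ T.Ancestor a b) :
    ∀ {d : ℕ} {u : Fin T.n}, PropP T k d u → PropP T' k d (f u)
  | 0, _, _ => trivial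
  | _ + 1, u, ⟨s, hcard, hanc, hinc, hprop⟩ => by
    have hinj : Function.Injective f := fun a b hab =>
      ((hf a b).mp (hab ▸ RootedFinTree.ancestor_refl _)).antisymm
        ((hf b a).mp (hab ▸ RootedFinTree.ancestor_refl _))
    refine ⟨s.image f, by rw [s.card_image_of_injective hinj, hcard], ?_, ?_, ?_⟩
    · simpa [hf] using hanc
    · simp only [Finset.mem_image, forall_exists_index, and_imp, forall_apply_eq_imp_iff₂, hf]
      exact fun v hv w hw hne => hinc v hv w hw (fun h => hne (h ▸ rfl))
    · simpa using fun v hv => (hprop v hv).map f hf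

namespace IsNiceDecon

open RootedFinTree

variable {M G : RootedFinTree} {μ : Fin M.n → Set (Fin G.n)} (hμ : IsNiceDecon M G μ)
include hμ

theorem exists_mem (g : Fin G.n) : ∃ m, g ∈ μ m := by
  obtain ⟨h, h', -, hg, -⟩ := hμ.1.1 g g (Or.inl rfl)
  exact hg.elim (⟨h, ·⟩) (⟨h', ·⟩)

theorem eq_of_mem {g : Fin G.n} {m m' : Fin M.n} (hg : g ∈ μ m) (hg' : g ∈ μ m') : m = m' :=
  by_contra fun hne => Set.disjoint_left.mp (hμ.2.1.2.1 m m' hne) hg hg'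

/-- By coverage an edge of `G` lies in one bag or in the bags of an edge of `M`, and niceness
forbids that `M`-edge from pointing upwards. -/
theorem eq_or_isChild_of_isChild {g g' : Fin G.n} {m m' : Fin M.n} (h : G.IsChild g g')
    (hg : g ∈ μ m) (hg' : g' ∈ μ m') : m = m' ∨ M.IsChild m m' := by
  obtain ⟨n, n', hnn', hgn, hg'n⟩ := hμ.1.1 g g' (Or.inr h.1)
  have hm : m = n ∨ m = n' := hgn.imp (hμ.eq_of_mem hg) (hμ.eq_of_mem hg)
  have hm' : m' = n ∨ m' = n' := hg'n.imp (hμ.eq_of_mem hg') (hμ.eq_of_mem hg')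
  by_cases he : m = m'
  · exact Or.inl he
  have hadj : M.G.Adj m m' := by
    rcases hnn' with rfl | hnn' <;> rcases hm with rfl | rfl <;> rcases hm' with rfl | rfl <;>
      first | exact (he rfl).elim | exact hnn' | exact hnn'.symm
  refine Or.inr ((isChild_or_isChild_of_adj hadj).resolve_right fun hc => ?_)
  have hup := (hμ.2.2.2 m' m g' g hc hg' hg h.1.symm).2
  have hdown := h.2
  omega

theorem ancestor_of_ancestor {g g' : Fin G.n} {m m' : Fin M.n} (h : G.Ancestor g g')
    (hg : g ∈ μ m) (hg' : g' ∈ μ m') : M.Ancestor m m' := by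
  have hr := ancestor_iff_reflTransGen.mp h
  clear h
  induction hr generalizing m' with
  | refl => exact hμ.eq_of_mem hg hg' ▸ ancestor_refl m
  | @tail p g' _ hpg' ih =>
    obtain ⟨n, hpn⟩ := hμ.exists_mem p
    rcases hμ.eq_or_isChild_of_isChild hpg' hpn hg' with rfl | hc
    · exact ih hpn
    · exact (ih hpn).trans hc.ancestor

section Top

variable {top : Fin M.n → Fin G.n} (htop : ∀ m, top m ∈ μ m ∧ ∀ g ∈ μ m, G.Ancestor (top m) g)
include htop

/-- An edge of `G` from bag `m` down to bag `m'` lies below both tops, so the tops are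
comparable, and `top m'` cannot be above `top m` since `m'` is not above `m`. -/
theorem ancestor_top_of_isChild {m m' : Fin M.n} (h : M.IsChild m m') :
    G.Ancestor (top m) (top m') := by
  obtain ⟨g, hg, g', hg', hgg'⟩ := hμ.2.1.2.2 m m' h.1
  have hg'_below : G.Ancestor (top m) g' :=
    ((htop m).2 g hg).trans (hμ.2.2.2 m m' g g' h hg hg' hgg').ancestor
  refine (hg'_below.total ((htop m').2 g' hg')).resolve_right fun hup => h.1.ne ?_
  exact h.ancestor.antisymm (hμ.ancestor_of_ancestor hup (htop m').1 (htop m).1)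

theorem ancestor_top_iff (m m' : Fin M.n) :
    G.Ancestor (top m) (top m') ↔ M.Ancestor m m' := by
  refine ⟨fun h => hμ.ancestor_of_ancestor h (htop m).1 (htop m').1, fun h => ?_⟩
  have hr := ancestor_iff_reflTransGen.mp h
  clear h
  induction hr with
  | refl => exact ancestor_refl _
  | tail _ hc ih => exact ih.trans (hμ.ancestor_top_of_isChild htop hc)

end Top

theorem exists_ancestor_embedding :
    ∃ f : Fin M.n → Fin G.n, f M.root = G.root ∧
      ∀ m m', G.Ancestor (f m) (f m') ↔ M.Ancestor m m' := by
  choose top htop using fun m => exists_ancestor_of_connSet (hμ.2.1.1 m)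
  exact ⟨top, ((htop M.root).2 _ hμ.2.2.1).eq_root, hμ.ancestor_top_iff htop⟩

end IsNiceDecon

theorem property_transfer_general (M G : RootedFinTree) (μ : Fin M.n → Set (Fin G.n))
    (hμ : IsNiceDecon M G μ) (d k : ℕ)
    (hM : PropP M k d M.root) : PropP G k d G.root := by
  obtain ⟨f, hroot, hf⟩ := hμ.exists_ancestor_embedding
  exact hroot ▸ hM.map f hf

/-- if `(μ m)_m` is a nice `M`-deconstruction of `G` and `M` has
property `P(d,k)` (for `d ≥ 0`, `k ≥ 1`), then `G` has property `P(d,k)`. -/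
theorem property_transfer (M G : RootedFinTree) (μ : Fin M.n → Set (Fin G.n))
    (hμ : IsNiceDecon M G μ) (d k : ℕ) (hk : 1 ≤ k)
    (hM : PropP M k d M.root) : PropP G k d G.root :=
  property_transfer_general M G μ hμ d k hM
end
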